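/- arXiv:2204.02732 — 5 statements merged into one kernel-verified Lean document; each statement's English description precedes it below -/
import Mathlib

section
/- Let ℓ ≥ 3 be an integer and let c = (ℓ² − 3ℓ + 6)/2. Let S be a Steiner triple system which admits a colouring in which every colour class, except possibly one, has at least c points. Then S admits an ℓ-good sequencing. -/
/-- A Steiner triple system on point set `points` with block set `blocks`:
every block is a 3-element subset of `points`, and every pair of distinct
points lies in exactly one block. -/
def IsSTS {α : Type*} [DecidableEq α] (points : Finset α) (blocks : Finset (Finset α)) : Prop :=
  (∀ b ∈ blocks, b ⊆ points ∧ b.card = 3) ∧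
  (∀ x ∈ points, ∀ y ∈ points, x ≠ y → ∃! b, b ∈ blocks ∧ x ∈ b ∧ y ∈ b)

/-- An `ℓ`-good sequencing: a permutation (listing) of the points such that no
`ℓ` consecutive entries contain a block. -/
def IsGoodSeq {α : Type*} [DecidableEq α] (points : Finset α) (blocks : Finset (Finset α))
    (ℓ : ℕ) (L : List α) : Prop :=
  L.Nodup ∧ L.toFinset = points ∧
  ∀ i : ℕ, ∀ b ∈ blocks, ¬ b ⊆ ((L.drop i).take ℓ).toFinset

/-- A cyclic `ℓ`-good sequencing: a permutation (listing) of the points such that no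
`ℓ` cyclically consecutive entries contain a block. -/
def IsCyclicGoodSeq {α : Type*} [DecidableEq α] (points : Finset α) (blocks : Finset (Finset α))
    (ℓ : ℕ) (L : List α) : Prop :=
  L.Nodup ∧ L.toFinset = points ∧
  ∀ i : ℕ, ∀ b ∈ blocks, ¬ b ⊆ (((L ++ L).drop i).take ℓ).toFinset

/-- An independent set: a set of points containing no block. -/
def IsIndep {α : Type*} [DecidableEq α] (blocks : Finset (Finset α)) (I : Finset α) : Prop :=
  ∀ b ∈ blocks, ¬ b ⊆ I

/-- A (proper) colouring with colour set `Fin k`: no block is monochromatic,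
i.e. every colour class is an independent set. -/
def IsColouring {α : Type*} [DecidableEq α] (blocks : Finset (Finset α)) {k : ℕ}
    (χ : α → Fin k) : Prop :=
  ∀ b ∈ blocks, ∃ x ∈ b, ∃ y ∈ b, χ x ≠ χ y

/-- A colouring with three explicitly given colour classes `A`, `B`, `C`:
they partition the point set and each is independent. -/
def IsColouring3 {α : Type*} [DecidableEq α] (points : Finset α) (blocks : Finset (Finset α))
    (A B C : Finset α) : Prop :=
  A ∪ B ∪ C = points ∧ Disjoint A B ∧ Disjoint A C ∧ Disjoint B C ∧
  IsIndep blocks A ∧ IsIndep blocks B ∧ IsIndep blocks C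

section goodseq_aux
variable {α : Type*} [DecidableEq α]

def GoodLAux (blocks : Finset (Finset α)) (ℓ : ℕ) (L : List α) : Prop :=
  ∀ i : ℕ, ∀ b ∈ blocks, ¬ b ⊆ ((L.drop i).take ℓ).toFinset

def TF (ℓ : ℕ) (L : List α) : Finset α := (L.drop (L.length - (ℓ-1))).toFinset

lemma TF_subset (ℓ : ℕ) (L : List α) : TF ℓ L ⊆ L.toFinset := by
  intro x hx
  simp only [TF, List.mem_toFinset] at hx ⊢
  exact List.mem_of_mem_drop hx

lemma goodL_not_sub_TF (blocks : Finset (Finset α)) (ℓ : ℕ) (hℓ : 1 ≤ ℓ) (L : List α)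
    (hG : GoodLAux blocks ℓ L) (b : Finset α) (hb : b ∈ blocks) : ¬ b ⊆ TF ℓ L := by
  have h := hG (L.length - (ℓ-1)) b hb
  have heq : (L.drop (L.length - (ℓ-1))).take ℓ = L.drop (L.length - (ℓ-1)) := by
    apply List.take_of_length_le
    rw [List.length_drop]; omega
  rw [heq] at h
  exact h

lemma choose_succ_two (n : ℕ) : (n+1).choose 2 = n.choose 2 + n := by
  have h : n.choose (Nat.succ 1) = n.choose 2 := rfl
  simp only [Nat.choose_succ_succ n 1, Nat.choose_one_right, h]; omega

lemma choose_two_add (d e : ℕ) : (d+e).choose 2 = d.choose 2 + e.choose 2 + d*e := by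
  induction d with
  | zero => simp
  | succ d ih =>
    have h1 := choose_succ_two (d+e)
    have h2 := choose_succ_two d
    have h3 : d+1+e = (d+e)+1 := by omega
    rw [h3, h1, ih, h2, Nat.succ_mul]
    ring

lemma two_mul_choose_two (n : ℕ) : 2 * n.choose 2 = n * (n-1) := by
  induction n with
  | zero => simp
  | succ n ih =>
    rw [choose_succ_two]
    cases n with
    | zero => simp
    | succ m =>
      simp only [Nat.succ_sub_one] at *
      rw [Nat.mul_add, ih]
      ring

lemma int_p12 (p : ℕ) : (0:ℤ) ≤ ((p:ℤ)-1)*((p:ℤ)-2) := by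
  rcases p with _|_|q
  · norm_num
  · norm_num
  · have h1 : ((q+1+1:ℕ):ℤ) = (q:ℤ)+2 := by push_cast; ring
    rw [h1]
    have h2 : ((q:ℤ)+2-1)*((q:ℤ)+2-2) = ((q:ℤ)+1)*(q:ℤ) := by ring
    rw [h2]
    positivity

lemma count_lt (ℓ c d e p : ℕ) (hℓ : 3 ≤ ℓ) (hc : 2*(c:ℤ) = (ℓ:ℤ)^2 - 3*ℓ + 6)
    (hd : 1 ≤ d) (hdp : d + p ≤ ℓ - 1) (hep : e ≤ p) : d.choose 2 + d*e + p < c := by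
  have h2 := two_mul_choose_two d
  have hcast : 2*((d.choose 2 : ℤ)) = (d:ℤ)*((d:ℤ)-1) := by
    have h : ((d*(d-1) : ℕ) : ℤ) = (d:ℤ)*((d:ℤ)-1) := by
      push_cast [Nat.cast_sub hd]; ring
    rw [← h]; exact_mod_cast congrArg (Nat.cast (R := ℤ)) h2
  have hdp' : (d:ℤ) + (p:ℤ) ≤ (ℓ:ℤ) - 1 := by
    have h : ((ℓ-1:ℕ):ℤ) = (ℓ:ℤ)-1 := by push_cast [Nat.cast_sub (by omega : 1 ≤ ℓ)]; ring
    rw [← h]; exact_mod_cast hdp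
  have hep' : (e:ℤ) ≤ (p:ℤ) := by exact_mod_cast hep
  have hd' : (1:ℤ) ≤ (d:ℤ) := by exact_mod_cast hd
  suffices h : 2*((d.choose 2 : ℤ) + (d:ℤ)*(e:ℤ) + (p:ℤ)) + 2 ≤ 2*(c:ℤ) by
    have h2' : (d.choose 2 : ℤ) + (d:ℤ)*(e:ℤ) + (p:ℤ) < (c:ℤ) := by linarith
    exact_mod_cast h2'
  have hp12 := int_p12 p
  have hs : (0:ℤ) ≤ ((ℓ:ℤ)-1-d-p) * (((ℓ:ℤ)-1-d-p)+2*p+2*d-1) := by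
    apply mul_nonneg <;> linarith
  have hde : (0:ℤ) ≤ 2*(d:ℤ)*((p:ℤ)-(e:ℤ)) := by
    have hd0 : (0:ℤ) ≤ (d:ℤ) := by linarith
    nlinarith
  nlinarith [hcast, hs, hp12, hde]

lemma goodL_append (blocks : Finset (Finset α)) (ℓ : ℕ) (hℓ : 1 ≤ ℓ)
    (hb3 : ∀ b ∈ blocks, b.card = 3) (L : List α) (z : α)
    (hG : GoodLAux blocks ℓ L) (hz : ∀ b ∈ blocks, ¬ b ⊆ insert z (TF ℓ L)) :
    GoodLAux blocks ℓ (L ++ [z]) := by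
  intro i b hb hsub
  by_cases hi : i ≤ L.length
  · have hdrop : (L ++ [z]).drop i = L.drop i ++ [z] := by
      rw [List.drop_append]
      have h0 : i - L.length = 0 := by omega
      rw [h0, List.drop_zero]
    by_cases hlen : ℓ ≤ (L.drop i).length
    · have heq : ((L ++ [z]).drop i).take ℓ = (L.drop i).take ℓ := by
        rw [hdrop, List.take_append]
        have h0 : ℓ - (L.drop i).length = 0 := by omega
        rw [h0]
        simp
      rw [heq] at hsub
      exact hG i b hb hsub
    · apply hz b hb
      intro x hx
      have hx' := hsub hx
      rw [List.mem_toFinset] at hx'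
      have hx2 : x ∈ (L ++ [z]).drop i := List.mem_of_mem_take hx'
      rw [hdrop, List.mem_append] at hx2
      rcases hx2 with h | h
      · apply Finset.mem_insert_of_mem
        have hkey : L.drop i = (L.drop (L.length - (ℓ-1))).drop (i - (L.length - (ℓ-1))) := by
          rw [List.drop_drop]
          congr 1
          rw [List.length_drop] at hlen
          omega
        rw [hkey] at h
        have hmem : x ∈ L.drop (L.length - (ℓ-1)) := List.mem_of_mem_drop h
        simp only [TF, List.mem_toFinset]
        exact hmem
      · simp only [List.mem_singleton] at h
        subst h
        exact Finset.mem_insert_self _ _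
  · have hnil : (L ++ [z]).drop i = [] := by
      apply List.drop_eq_nil_of_le
      simp only [List.length_append, List.length_singleton]; omega
    rw [hnil] at hsub
    simp only [List.take_nil, List.toFinset_nil] at hsub
    have h3 := hb3 b hb
    have : b = ∅ := Finset.subset_empty.mp hsub
    rw [this] at h3
    simp at h3

lemma goodL_nil (blocks : Finset (Finset α)) (ℓ : ℕ) (hb3 : ∀ b ∈ blocks, b.card = 3) :
    GoodLAux blocks ℓ ([] : List α) := by
  intro i b hb hsub
  simp only [List.drop_nil, List.take_nil, List.toFinset_nil] at hsub
  have h3 := hb3 b hb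
  have : b = ∅ := Finset.subset_empty.mp hsub
  rw [this] at h3
  simp at h3

lemma exists_good (points : Finset α) (blocks : Finset (Finset α)) (hS : IsSTS points blocks)
    (ℓ c : ℕ) (hℓ : 3 ≤ ℓ) (hc : 2*(c:ℤ) = (ℓ:ℤ)^2 - 3*(ℓ:ℤ) + 6)
    (C : Finset α) (hCind : IsIndep blocks C)
    (L₀ P : List α) (R : Finset α) (hR : R.Nonempty) (hRC : R ⊆ C)
    (hPC : P.toFinset = C \ R)
    (hnd : (L₀ ++ P).Nodup)
    (hG : GoodLAux blocks ℓ (L₀ ++ P))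
    (hdisjC : Disjoint C L₀.toFinset)
    (hbig : c ≤ C.card ∨ L₀ = []) :
    ∃ z ∈ R, ∀ b ∈ blocks, ¬ b ⊆ insert z (TF ℓ (L₀ ++ P)) := by
  classical
  by_contra hcon
  push_neg at hcon
  set L := L₀ ++ P with hL
  set T := TF ℓ L with hTdef
  -- the chosen block for each bad z
  have hch : ∀ z ∈ R, ∃ b, b ∈ blocks ∧ b ⊆ insert z T := by
    intro z hz
    obtain ⟨b, hb1, hb2⟩ := hcon z hz
    exact ⟨b, hb1, hb2⟩
  let g : α → Finset α := fun z =>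
    if h : ∃ b, b ∈ blocks ∧ b ⊆ insert z T then h.choose else ∅
  have hg : ∀ z ∈ R, g z ∈ blocks ∧ g z ⊆ insert z T := by
    intro z hz
    have h := hch z hz
    simp only [g, dif_pos h]
    exact h.choose_spec
  have hzT : ∀ z ∈ R, z ∉ T := by
    intro z hz hzT
    have h1 : z ∈ L.toFinset := TF_subset ℓ L hzT
    rw [hL, List.toFinset_append, Finset.mem_union] at h1
    rcases h1 with h | h
    · exact (Finset.disjoint_left.mp hdisjC (hRC hz)) h
    · rw [hPC, Finset.mem_sdiff] at h
      exact h.2 hz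
  have hzg : ∀ z ∈ R, z ∈ g z := by
    intro z hz
    obtain ⟨hb1, hb2⟩ := hg z hz
    by_contra hzg
    apply goodL_not_sub_TF blocks ℓ (by omega) L hG (g z) hb1
    intro x hx
    have := hb2 hx
    rcases Finset.mem_insert.mp this with h | h
    · subst h; exact absurd hx hzg
    · exact h
  let f : α → Finset α := fun z => g z \ {z}
  have hfcard : ∀ z ∈ R, (f z).card = 2 := by
    intro z hz
    have h3 := (hS.1 (g z) (hg z hz).1).2
    have : ({z} : Finset α) ⊆ g z := by simp [hzg z hz]
    simp only [f]
    rw [Finset.card_sdiff_of_subset this, h3, Finset.card_singleton]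
  have hfT : ∀ z ∈ R, f z ⊆ T := by
    intro z hz x hx
    rw [Finset.mem_sdiff, Finset.mem_singleton] at hx
    rcases Finset.mem_insert.mp ((hg z hz).2 hx.1) with h | h
    · exact absurd h hx.2
    · exact h
  have hfC : ∀ z ∈ R, ¬ f z ⊆ C := by
    intro z hz hsub
    apply hCind (g z) (hg z hz).1
    intro x hx
    by_cases hxz : x = z
    · subst hxz; exact hRC hz
    · exact hsub (by rw [Finset.mem_sdiff, Finset.mem_singleton]; exact ⟨hx, hxz⟩)
  -- the target set of pairs
  set S := T.powersetCard 2 \ (T ∩ C).powersetCard 2 with hSdef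
  have hmap : ∀ z ∈ R, f z ∈ S := by
    intro z hz
    rw [hSdef, Finset.mem_sdiff, Finset.mem_powersetCard, Finset.mem_powersetCard]
    refine ⟨⟨hfT z hz, hfcard z hz⟩, ?_⟩
    rintro ⟨hsub, -⟩
    exact hfC z hz (fun x hx => (Finset.mem_inter.mp (hsub hx)).2)
  have hinj : Set.InjOn f R := by
    intro z₁ hz₁ z₂ hz₂ hf
    simp only [Finset.mem_coe] at hz₁ hz₂
    obtain ⟨x, y, hxy, hpair⟩ := Finset.card_eq_two.mp (hfcard z₁ hz₁)
    have hx1 : x ∈ f z₁ := by rw [hpair]; simp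
    have hy1 : y ∈ f z₁ := by rw [hpair]; simp
    have hx2 : x ∈ f z₂ := by rw [hf] at hx1; exact hx1
    have hy2 : y ∈ f z₂ := by rw [hf] at hy1; exact hy1
    have hxg1 : x ∈ g z₁ := (Finset.mem_sdiff.mp hx1).1
    have hyg1 : y ∈ g z₁ := (Finset.mem_sdiff.mp hy1).1
    have hxg2 : x ∈ g z₂ := (Finset.mem_sdiff.mp hx2).1
    have hyg2 : y ∈ g z₂ := (Finset.mem_sdiff.mp hy2).1
    have hxp : x ∈ points := (hS.1 (g z₁) (hg z₁ hz₁).1).1 hxg1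
    have hyp : y ∈ points := (hS.1 (g z₁) (hg z₁ hz₁).1).1 hyg1
    obtain ⟨b, -, hu⟩ := hS.2 x hxp y hyp hxy
    have he1 : g z₁ = b := hu (g z₁) ⟨(hg z₁ hz₁).1, hxg1, hyg1⟩
    have he2 : g z₂ = b := hu (g z₂) ⟨(hg z₂ hz₂).1, hxg2, hyg2⟩
    have hgg : g z₂ = g z₁ := by rw [he1, he2]
    have hz2g1 : z₂ ∈ g z₁ := by rw [← hgg]; exact hzg z₂ hz₂
    by_contra hne
    have : z₂ ∈ f z₁ := by
      rw [Finset.mem_sdiff, Finset.mem_singleton]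
      exact ⟨hz2g1, fun h => hne h.symm⟩
    rw [hf] at this
    rw [Finset.mem_sdiff, Finset.mem_singleton] at this
    exact this.2 rfl
  have hcard : R.card ≤ S.card := Finset.card_le_card_of_injOn f hmap hinj
  have hSsub : (T ∩ C).powersetCard 2 ⊆ T.powersetCard 2 :=
    Finset.powersetCard_mono Finset.inter_subset_left
  have hScard : S.card = T.card.choose 2 - (T ∩ C).card.choose 2 := by
    rw [hSdef, Finset.card_sdiff_of_subset hSsub, Finset.card_powersetCard, Finset.card_powersetCard]
  set d := (T \ C).card with hddef
  set e := (T ∩ C).card with hedef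
  have hTde : d + e = T.card := Finset.card_sdiff_add_card_inter T C
  by_cases hd0 : d = 0
  · rw [hScard, ← hTde, hd0, Nat.zero_add, Nat.sub_self] at hcard
    have := Finset.card_pos.mpr hR
    omega
  · -- d ≥ 1
    have hd1 : 1 ≤ d := by omega
    have hCbig : c ≤ C.card := by
      rcases hbig with h | h
      · exact h
      · exfalso
        apply hd0
        rw [hddef, Finset.card_eq_zero, Finset.sdiff_eq_empty_iff_subset]
        intro x hx
        have h1 : x ∈ L.toFinset := TF_subset ℓ L hx
        rw [hL, h, List.nil_append] at h1
        rw [hPC] at h1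
        exact (Finset.mem_sdiff.mp h1).1
    set p := P.length with hpdef
    have hPnd : P.Nodup := hnd.of_append_right
    have hPcard : P.toFinset.card = p := by
      rw [List.toFinset_card_of_nodup hPnd]
    have hep : e ≤ p := by
      rw [hedef, ← hPcard]
      apply Finset.card_le_card
      intro x hx
      rw [Finset.mem_inter] at hx
      have h1 : x ∈ L.toFinset := TF_subset ℓ L hx.1
      rw [hL, List.toFinset_append, Finset.mem_union] at h1
      rcases h1 with h | h
      · exact absurd h (Finset.disjoint_left.mp hdisjC hx.2)
      · exact h
    have hdp : d + p ≤ ℓ - 1 := by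
      have hsub2 : T \ C ⊆ (L₀.drop (L.length - (ℓ-1))).toFinset := by
        intro x hx
        rw [Finset.mem_sdiff] at hx
        have h1 : x ∈ T := hx.1
        rw [hTdef] at h1
        simp only [TF, List.mem_toFinset] at h1
        rw [hL, List.drop_append, List.mem_append] at h1
        rcases h1 with h | h
        · rw [List.mem_toFinset]; exact h
        · exfalso
          apply hx.2
          have : x ∈ P.toFinset := List.mem_toFinset.mpr (List.mem_of_mem_drop h)
          rw [hPC, Finset.mem_sdiff] at this
          exact this.1
      have hd2 : d ≤ L₀.length - (L.length - (ℓ-1)) := by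
        calc d ≤ (L₀.drop (L.length - (ℓ-1))).toFinset.card := Finset.card_le_card hsub2
        _ ≤ (L₀.drop (L.length - (ℓ-1))).length := List.toFinset_card_le _
        _ = L₀.length - (L.length - (ℓ-1)) := List.length_drop
      have hlen : L.length = L₀.length + p := by rw [hL, List.length_append, hpdef]
      omega
    have hRcard : R.card ≤ d.choose 2 + d*e := by
      have h1 := choose_two_add d e
      rw [hScard, ← hTde] at hcard
      omega
    have hCR : C.card = R.card + p := by
      have h1 : (C \ R).card = C.card - R.card := Finset.card_sdiff_of_subset hRC
      have h2 : R.card ≤ C.card := Finset.card_le_card hRC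
      rw [← hPC, hPcard] at h1
      omega
    have := count_lt ℓ c d e p hℓ hc hd1 hdp hep
    omega

lemma place (points : Finset α) (blocks : Finset (Finset α)) (hS : IsSTS points blocks)
    (ℓ c : ℕ) (hℓ : 3 ≤ ℓ) (hc : 2*(c:ℤ) = (ℓ:ℤ)^2 - 3*(ℓ:ℤ) + 6)
    (C : Finset α) (hCind : IsIndep blocks C)
    (L₀ : List α) (hnd : L₀.Nodup) (hG : GoodLAux blocks ℓ L₀)
    (hdisjC : Disjoint C L₀.toFinset)
    (hbig : c ≤ C.card ∨ L₀ = []) :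
    ∃ L : List α, L.Nodup ∧ GoodLAux blocks ℓ L ∧ L.toFinset = L₀.toFinset ∪ C := by
  have hb3 : ∀ b ∈ blocks, b.card = 3 := fun b hb => (hS.1 b hb).2
  have aux : ∀ n (P : List α) (R : Finset α), R.card = n → R ⊆ C → P.toFinset = C \ R →
      (L₀ ++ P).Nodup → GoodLAux blocks ℓ (L₀ ++ P) →
      ∃ L, L.Nodup ∧ GoodLAux blocks ℓ L ∧ L.toFinset = (L₀ ++ P).toFinset ∪ R := by
    intro n
    induction n with
    | zero =>
      intro P R hcard hRC hPC hnd' hG'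
      have hR0 : R = ∅ := Finset.card_eq_zero.mp hcard
      exact ⟨L₀ ++ P, hnd', hG', by rw [hR0, Finset.union_empty]⟩
    | succ n ih =>
      intro P R hcard hRC hPC hnd' hG'
      have hR : R.Nonempty := Finset.card_pos.mp (by omega)
      obtain ⟨z, hzR, hz⟩ := exists_good points blocks hS ℓ c hℓ hc C hCind L₀ P R hR hRC
        hPC hnd' hG' hdisjC hbig
      have hzC : z ∈ C := hRC hzR
      have hzL : z ∉ L₀ ++ P := by
        intro hmem
        rw [List.mem_append] at hmem
        rcases hmem with h | h
        · exact Finset.disjoint_left.mp hdisjC hzC (List.mem_toFinset.mpr h)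
        · have : z ∈ P.toFinset := List.mem_toFinset.mpr h
          rw [hPC, Finset.mem_sdiff] at this
          exact this.2 hzR
      have hnd2 : ((L₀ ++ P) ++ [z]).Nodup := by
        rw [List.nodup_append]
        refine ⟨hnd', List.nodup_singleton z, ?_⟩
        intro a ha b hmem hab
        rw [List.mem_singleton] at hmem
        subst hmem
        subst hab
        exact hzL ha
      have hG2 : GoodLAux blocks ℓ ((L₀ ++ P) ++ [z]) :=
        goodL_append blocks ℓ (by omega) hb3 _ z hG' hz
      have hPC' : (P ++ [z]).toFinset = C \ (R.erase z) := by
        ext x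
        simp only [List.toFinset_append, Finset.mem_union, List.toFinset_cons,
          List.toFinset_nil, insert_empty_eq, Finset.mem_singleton, hPC,
          Finset.mem_sdiff, Finset.mem_erase]
        constructor
        · rintro (⟨h1, h2⟩ | rfl)
          · exact ⟨h1, fun h => h2 h.2⟩
          · exact ⟨hzC, fun h => h.1 rfl⟩
        · rintro ⟨h1, h2⟩
          by_cases hx : x = z
          · right; exact hx
          · left; exact ⟨h1, fun hR' => h2 ⟨hx, hR'⟩⟩
      have hcard' : (R.erase z).card = n := by
        rw [Finset.card_erase_of_mem hzR]; omega
      have hRC' : R.erase z ⊆ C := (Finset.erase_subset _ _).trans hRC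
      obtain ⟨L, h1, h2, h3⟩ := ih (P ++ [z]) (R.erase z) hcard' hRC' hPC'
        (by rw [← List.append_assoc]; exact hnd2) (by rw [← List.append_assoc]; exact hG2)
      refine ⟨L, h1, h2, ?_⟩
      rw [h3]
      ext x
      simp only [List.toFinset_append, Finset.mem_union, List.toFinset_cons,
        List.toFinset_nil, insert_empty_eq, Finset.mem_singleton, Finset.mem_erase]
      constructor
      · rintro ((h | (h | rfl)) | ⟨-, h⟩)
        · exact Or.inl (Or.inl h)
        · exact Or.inl (Or.inr h)
        · exact Or.inr hzR
        · exact Or.inr h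
      · rintro ((h | h) | h)
        · exact Or.inl (Or.inl h)
        · exact Or.inl (Or.inr (Or.inl h))
        · by_cases hx : x = z
          · exact Or.inl (Or.inr (Or.inr hx))
          · exact Or.inr ⟨hx, h⟩
  obtain ⟨L, h1, h2, h3⟩ := aux C.card [] C rfl (Finset.Subset.refl C)
    (by simp) (by simpa using hnd) (by simpa using hG)
  exact ⟨L, h1, h2, by simpa using h3⟩

lemma mem_foldr_union (Cs : List (Finset α)) (x : α) :
    x ∈ Cs.foldr (· ∪ ·) ∅ ↔ ∃ C ∈ Cs, x ∈ C := by
  induction Cs with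
  | nil => simp
  | cons C Cs ih => simp [ih]

lemma outer (points : Finset α) (blocks : Finset (Finset α)) (hS : IsSTS points blocks)
    (ℓ c : ℕ) (hℓ : 3 ≤ ℓ) (hc : 2*(c:ℤ) = (ℓ:ℤ)^2 - 3*(ℓ:ℤ) + 6) :
    ∀ (Cs : List (Finset α)) (L₀ : List α), L₀.Nodup → GoodLAux blocks ℓ L₀ →
    (∀ C ∈ Cs, IsIndep blocks C) → (∀ C ∈ Cs, c ≤ C.card) →
    (∀ C ∈ Cs, Disjoint C L₀.toFinset) → Cs.Pairwise Disjoint →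
    ∃ L, L.Nodup ∧ GoodLAux blocks ℓ L ∧ L.toFinset = L₀.toFinset ∪ Cs.foldr (· ∪ ·) ∅ := by
  intro Cs
  induction Cs with
  | nil =>
    intro L₀ h1 h2 _ _ _ _
    exact ⟨L₀, h1, h2, by simp⟩
  | cons C Cs ih =>
    intro L₀ h1 h2 hind hbig hdisj hpw
    obtain ⟨L₁, g1, g2, g3⟩ := place points blocks hS ℓ c hℓ hc C
      (hind C (List.mem_cons_self)) L₀ h1 h2 (hdisj C (List.mem_cons_self))
      (Or.inl (hbig C (List.mem_cons_self)))
    obtain ⟨L, f1, f2, f3⟩ := ih L₁ g1 g2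
      (fun C' hC' => hind C' (List.mem_cons_of_mem C hC'))
      (fun C' hC' => hbig C' (List.mem_cons_of_mem C hC'))
      (fun C' hC' => by
        rw [g3, Finset.disjoint_union_right]
        exact ⟨hdisj C' (List.mem_cons_of_mem C hC'),
          ((List.pairwise_cons.mp hpw).1 C' hC').symm⟩)
      (List.pairwise_cons.mp hpw).2
    refine ⟨L, f1, f2, ?_⟩
    rw [f3, g3]
    simp [Finset.union_assoc, List.foldr_cons]

end goodseq_aux

theorem stmt6 (ℓ : ℕ) (hℓ : 3 ≤ ℓ) (c : ℕ) (hc : 2 * (c : ℤ) = ℓ ^ 2 - 3 * ℓ + 6)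
    {α : Type*} [DecidableEq α] (points : Finset α) (blocks : Finset (Finset α))
    (hS : IsSTS points blocks) (k : ℕ) (χ : α → Fin k) (hχ : IsColouring blocks χ)
    (j₀ : Fin k)
    (hclasses : ∀ j : Fin k, j ≠ j₀ → c ≤ (points.filter (fun x => χ x = j)).card) :
    ∃ L : List α, IsGoodSeq points blocks ℓ L := by
  classical
  have hb3 : ∀ b ∈ blocks, b.card = 3 := fun b hb => (hS.1 b hb).2
  set Cls : Fin k → Finset α := fun j => points.filter (fun x => χ x = j) with hCls
  have hind : ∀ j, IsIndep blocks (Cls j) := by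
    intro j b hb hsub
    obtain ⟨x, hx, y, hy, hxy⟩ := hχ b hb
    have hx' := hsub hx
    have hy' := hsub hy
    simp only [hCls, Finset.mem_filter] at hx' hy'
    exact hxy (hx'.2.trans hy'.2.symm)
  have hdisjCls : ∀ j j' : Fin k, j ≠ j' → Disjoint (Cls j) (Cls j') := by
    intro j j' hne
    rw [Finset.disjoint_left]
    intro x hx hx'
    simp only [hCls, Finset.mem_filter] at hx hx'
    exact hne (hx.2 ▸ hx'.2 ▸ rfl)
  obtain ⟨L₁, g1, g2, g3⟩ := place points blocks hS ℓ c hℓ hc (Cls j₀) (hind j₀) []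
    List.nodup_nil (goodL_nil blocks ℓ hb3) (by simp) (Or.inr rfl)
  rw [List.toFinset_nil, Finset.empty_union] at g3
  set Cs : List (Finset α) := (Finset.univ.erase j₀).toList.map Cls with hCs
  have hmemCs : ∀ C ∈ Cs, ∃ j : Fin k, j ≠ j₀ ∧ C = Cls j := by
    intro C hC
    rw [hCs, List.mem_map] at hC
    obtain ⟨j, hj, rfl⟩ := hC
    rw [Finset.mem_toList, Finset.mem_erase] at hj
    exact ⟨j, hj.1, rfl⟩
  obtain ⟨L, f1, f2, f3⟩ := outer points blocks hS ℓ c hℓ hc Cs L₁ g1 g2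
    (by intro C hC; obtain ⟨j, -, rfl⟩ := hmemCs C hC; exact hind j)
    (by intro C hC; obtain ⟨j, hj, rfl⟩ := hmemCs C hC; exact hclasses j hj)
    (by
      intro C hC
      obtain ⟨j, hj, rfl⟩ := hmemCs C hC
      rw [g3]
      exact hdisjCls j j₀ hj)
    (by
      rw [hCs]
      apply List.Pairwise.map
      · exact fun a b h => hdisjCls a b h
      · exact (Finset.univ.erase j₀).nodup_toList)
  refine ⟨L, f1, ?_, f2⟩
  rw [f3, g3]
  ext x
  constructor
  · intro hx
    rcases Finset.mem_union.mp hx with h | h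
    · exact Finset.filter_subset _ _ h
    · rw [mem_foldr_union] at h
      obtain ⟨C, hC, hxC⟩ := h
      obtain ⟨j, -, rfl⟩ := hmemCs C hC
      exact Finset.filter_subset _ _ hxC
  · intro hx
    rw [Finset.mem_union]
    by_cases hj : χ x = j₀
    · left
      simp only [hCls, Finset.mem_filter]
      exact ⟨hx, hj⟩
    · right
      rw [mem_foldr_union]
      refine ⟨Cls (χ x), ?_, ?_⟩
      · rw [hCs, List.mem_map]
        exact ⟨χ x, by rw [Finset.mem_toList, Finset.mem_erase]; exact ⟨hj, Finset.mem_univ _⟩, rfl⟩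
      · simp only [hCls, Finset.mem_filter]
        exact ⟨hx, trivial⟩
end

section
/- Let S be a Steiner triple system of order 25 with a colouring whose colour classes A, B, C have cardinalities |A| = 11, |B| = 7 and |C| = 7. Then S contains a block with two points in B and one point in A, or a block with two points in C and one point in A. (If all 21 pairs within B lay in blocks with third point in C and all 21 pairs within C lay in blocks with third point in B, these blocks would use 84 pairs with one point in B and one in C, whereas only 49 such pairs exist.) -/
/-! Count ordered pairs block by block. A block that is neither of type `BBA` nor `CCA` has
type `BBC`, `BCC`, or contains at most one point of each of `B` and `C` (the classes are
independent); in every case it contains at least as many `B`-`C` pairs as pairs inside `B` or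
inside `C`. Since each pair of points lies in exactly one block, summing over blocks gives
`|B|(|B|-1) + |C|(|C|-1) ≤ |B||C|`, false for `|B| = |C| = 7` since `84 > 49`. -/

open Finset

namespace IsSTS

variable {α : Type*} [DecidableEq α] {points : Finset α} {blocks : Finset (Finset α)}

-- Each ordered pair of distinct points of `X × Y` is counted in exactly one block.
theorem sum_card_distinct_pairs_inter (hS : IsSTS points blocks) {X Y : Finset α}
    (hX : X ⊆ points) (hY : Y ⊆ points) :
    ∑ t ∈ blocks, #{p ∈ (t ∩ X) ×ˢ (t ∩ Y) | p.1 ≠ p.2} = #{p ∈ X ×ˢ Y | p.1 ≠ p.2} := by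
  rw [← card_biUnion]
  · congr 1
    ext ⟨x, y⟩
    simp only [mem_biUnion, mem_filter, mem_product, mem_inter]
    constructor
    · rintro ⟨t, -, ⟨⟨-, hx⟩, -, hy⟩, hxy⟩
      exact ⟨⟨hx, hy⟩, hxy⟩
    · rintro ⟨⟨hx, hy⟩, hxy⟩
      obtain ⟨t, ⟨ht, hxt, hyt⟩, -⟩ := hS.2 x (hX hx) y (hY hy) hxy
      exact ⟨t, ht, ⟨⟨hxt, hx⟩, hyt, hy⟩, hxy⟩
  · intro t ht t' ht' hne
    rw [Function.onFun, disjoint_left]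
    rintro ⟨x, y⟩ hp hp'
    simp only [mem_filter, mem_product, mem_inter] at hp hp'
    obtain ⟨⟨⟨hxt, hx⟩, hyt, hy⟩, hxy⟩ := hp
    obtain ⟨⟨⟨hxt', -⟩, hyt', -⟩, -⟩ := hp'
    obtain ⟨u, -, hu⟩ := hS.2 x (hX hx) y (hY hy) hxy
    exact hne ((hu t ⟨ht, hxt, hyt⟩).trans (hu t' ⟨ht', hxt', hyt'⟩).symm)

theorem sum_card_offDiag_inter (hS : IsSTS points blocks) {X : Finset α} (hX : X ⊆ points) :
    ∑ t ∈ blocks, #(t ∩ X).offDiag = #X.offDiag := by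
  have hoff (s : Finset α) : {p ∈ s ×ˢ s | p.1 ≠ p.2} = s.offDiag := by
    ext; simp only [mem_filter, mem_product, mem_offDiag, and_assoc]
  simpa only [hoff] using hS.sum_card_distinct_pairs_inter hX hX

theorem sum_card_inter_mul_card_inter (hS : IsSTS points blocks) {X Y : Finset α}
    (hX : X ⊆ points) (hY : Y ⊆ points) (hXY : Disjoint X Y) :
    ∑ t ∈ blocks, #(t ∩ X) * #(t ∩ Y) = #X * #Y := by
  have hne {X Y : Finset α} (hXY : Disjoint X Y) :
      #{p ∈ X ×ˢ Y | p.1 ≠ p.2} = #X * #Y := by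
    rw [filter_true_of_mem, card_product]
    rintro ⟨x, y⟩ hp
    rw [mem_product] at hp
    exact disjoint_left.mp hXY hp.1 ∘ (· ▸ hp.2)
  rw [← hne hXY, ← hS.sum_card_distinct_pairs_inter hX hY]
  exact sum_congr rfl fun t _ ↦ (hne (hXY.mono inter_subset_right inter_subset_right)).symm

end IsSTS

theorem card_inter_lt_of_not_subset {α : Type*} [DecidableEq α] {s I : Finset α}
    (h : ¬ s ⊆ I) : #(s ∩ I) < #s :=
  card_lt_card (inter_subset_left.ssubset_of_ne fun he ↦ h (inter_eq_left.mp he))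

theorem card_inter_add_card_inter_add_card_inter {α : Type*} [DecidableEq α]
    {t A B C : Finset α} (ht : t ⊆ A ∪ B ∪ C) (hAB : Disjoint A B) (hAC : Disjoint A C)
    (hBC : Disjoint B C) : #(t ∩ A) + #(t ∩ B) + #(t ∩ C) = #t := by
  have hAB' : Disjoint (t ∩ A) (t ∩ B) := hAB.mono inter_subset_right inter_subset_right
  have hABC' : Disjoint (t ∩ A ∪ t ∩ B) (t ∩ C) :=
    disjoint_union_left.mpr ⟨hAC.mono inter_subset_right inter_subset_right,
      hBC.mono inter_subset_right inter_subset_right⟩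
  rw [← card_union_of_disjoint hAB', ← card_union_of_disjoint hABC',
    ← inter_union_distrib_left, ← inter_union_distrib_left, inter_eq_left.mpr ht]

theorem IsColouring3.card_offDiag_inter_add_le {α : Type*} [DecidableEq α]
    {points : Finset α} {blocks : Finset (Finset α)} {A B C t : Finset α}
    (hS : IsSTS points blocks) (hcol : IsColouring3 points blocks A B C) (ht : t ∈ blocks)
    (hB : ¬ (#(t ∩ B) = 2 ∧ #(t ∩ A) = 1)) (hC : ¬ (#(t ∩ C) = 2 ∧ #(t ∩ A) = 1)) :
    #(t ∩ B).offDiag + #(t ∩ C).offDiag ≤ #(t ∩ B) * #(t ∩ C) := by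
  obtain ⟨hpart, hAB, hAC, hBC, -, hIB, hIC⟩ := hcol
  obtain ⟨htpts, ht3⟩ := hS.1 t ht
  have hsplit := card_inter_add_card_inter_add_card_inter (hpart ▸ htpts) hAB hAC hBC
  have hB2 := card_inter_lt_of_not_subset (hIB t ht)
  have hC2 := card_inter_lt_of_not_subset (hIC t ht)
  rw [ht3] at hsplit hB2 hC2
  rw [offDiag_card, offDiag_card]
  generalize #(t ∩ A) = a at *
  generalize #(t ∩ B) = b at *
  generalize #(t ∩ C) = c at *
  interval_cases b <;> interval_cases c <;> omega

theorem IsColouring3.exists_block_two_in_B_or_C_one_in_A {α : Type*} [DecidableEq α]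
    {points : Finset α} {blocks : Finset (Finset α)} {A B C : Finset α}
    (hS : IsSTS points blocks) (hcol : IsColouring3 points blocks A B C)
    (hcard : #B * #C < #B * #B - #B + (#C * #C - #C)) :
    ∃ b ∈ blocks, ((b ∩ B).card = 2 ∧ (b ∩ A).card = 1) ∨
      ((b ∩ C).card = 2 ∧ (b ∩ A).card = 1) := by
  by_contra! hno
  have hB : B ⊆ points := hcol.1 ▸ subset_union_right.trans subset_union_left
  have hC : C ⊆ points := hcol.1 ▸ subset_union_right
  refine hcard.not_ge ?_
  rw [← offDiag_card, ← offDiag_card, ← hS.sum_card_offDiag_inter hB,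
    ← hS.sum_card_offDiag_inter hC, ← sum_add_distrib,
    ← hS.sum_card_inter_mul_card_inter hB hC hcol.2.2.2.1]
  exact sum_le_sum fun t ht ↦ hcol.card_offDiag_inter_add_le hS ht
    (fun h ↦ (hno t ht).1 h.1 h.2) (fun h ↦ (hno t ht).2 h.1 h.2)

theorem stmt11_general {α : Type*} [DecidableEq α] (points : Finset α) (blocks : Finset (Finset α))
    (hS : IsSTS points blocks)
    (A B C : Finset α) (hcol : IsColouring3 points blocks A B C)
    (hB : B.card = 7) (hC : C.card = 7) :
    ∃ b ∈ blocks, ((b ∩ B).card = 2 ∧ (b ∩ A).card = 1) ∨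
      ((b ∩ C).card = 2 ∧ (b ∩ A).card = 1) :=
  hcol.exists_block_two_in_B_or_C_one_in_A hS (by rw [hB, hC]; decide)

theorem stmt11 {α : Type*} [DecidableEq α] (points : Finset α) (blocks : Finset (Finset α))
    (hS : IsSTS points blocks) (hv : points.card = 25)
    (A B C : Finset α) (hcol : IsColouring3 points blocks A B C)
    (hA : A.card = 11) (hB : B.card = 7) (hC : C.card = 7) :
    ∃ b ∈ blocks, ((b ∩ B).card = 2 ∧ (b ∩ A).card = 1) ∨
      ((b ∩ C).card = 2 ∧ (b ∩ A).card = 1) :=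
  stmt11_general points blocks hS A B C hcol hB hC
end

section
/- Let S be a Steiner triple system of order 25 which admits a colouring whose three colour classes have cardinalities 11, 7 and 7. Then S admits a 5-good sequencing. -/
lemma card2' {α : Type*} [DecidableEq α] {a b : α} (h1 : a ≠ b) :
    ({a,b} : Finset α).card = 2 := by
  rw [Finset.card_insert_of_notMem (by simp [h1]), Finset.card_singleton]

lemma card3' {α : Type*} [DecidableEq α] {a b c : α} (h1 : a ≠ b) (h2 : a ≠ c) (h3 : b ≠ c) :
    ({a,b,c} : Finset α).card = 3 := by
  rw [Finset.card_insert_of_notMem (by simp [h1, h2]), card2' h3]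

lemma card4' {α : Type*} [DecidableEq α] {a b c d : α} (h1 : a ≠ b) (h2 : a ≠ c) (h3 : a ≠ d)
    (h4 : b ≠ c) (h5 : b ≠ d) (h6 : c ≠ d) : ({a,b,c,d} : Finset α).card = 4 := by
  rw [Finset.card_insert_of_notMem (by simp [h1, h2, h3]), card3' h4 h5 h6]

lemma pick_lemma {α : Type*} [DecidableEq α] {points : Finset α} {blocks : Finset (Finset α)}
    (hS : IsSTS points blocks) {X : Finset α} (hX : IsIndep blocks X)
    (P T S : Finset α) (hPX : P ⊆ X) (hTpts : T ⊆ points)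
    (hST : S ⊆ T) (hSX : S ⊆ X)
    (hlt : T.card.choose 2 - S.card.choose 2 < P.card) :
    ∃ x ∈ P, ∀ b ∈ blocks, x ∈ b → ¬ b ⊆ insert x T := by
  classical
  by_contra hcon
  push_neg at hcon
  set F := P.filter (fun z => ∃ b ∈ blocks, z ∈ b ∧ b ⊆ insert z T) with hFdef
  have hPF : P ⊆ F := by
    intro x hx
    obtain ⟨b, hb, hxb, hsub⟩ := hcon x hx
    exact Finset.mem_filter.mpr ⟨hx, b, hb, hxb, hsub⟩
  have hex : ∀ z ∈ F, ∃ b ∈ blocks, z ∈ b ∧ b ⊆ insert z T := fun z hz =>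
    (Finset.mem_filter.mp hz).2
  set g : α → Finset α := fun z =>
    if h : ∃ b ∈ blocks, z ∈ b ∧ b ⊆ insert z T then h.choose.erase z else ∅ with hgdef
  have hg : ∀ z ∈ F, ∃ b ∈ blocks, z ∈ b ∧ b ⊆ insert z T ∧ g z = b.erase z := by
    intro z hz
    have h := hex z hz
    obtain ⟨hb, hzb, hsub⟩ := h.choose_spec
    exact ⟨h.choose, hb, hzb, hsub, dif_pos h⟩
  have hmaps : ∀ z ∈ F, g z ∈ T.powersetCard 2 \ S.powersetCard 2 := by
    intro z hz
    obtain ⟨b, hb, hzb, hsub, hgz⟩ := hg z hz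
    have hcard3 : b.card = 3 := (hS.1 b hb).2
    have hzP : z ∈ P := (Finset.mem_filter.mp hz).1
    have heT : b.erase z ⊆ T := by
      intro x hx
      have hxz := Finset.mem_erase.mp hx
      rcases Finset.mem_insert.mp (hsub hxz.2) with h | h
      · exact absurd h hxz.1
      · exact h
    have hecard : (b.erase z).card = 2 := by
      rw [Finset.card_erase_of_mem hzb, hcard3]
    rw [hgz]
    refine Finset.mem_sdiff.mpr ⟨Finset.mem_powersetCard.mpr ⟨heT, hecard⟩, ?_⟩
    intro hmem
    have hsubS : b.erase z ⊆ S := (Finset.mem_powersetCard.mp hmem).1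
    refine hX b hb ?_
    intro x hxb
    by_cases hxz : x = z
    · exact hxz ▸ hPX hzP
    · exact hSX (hsubS (Finset.mem_erase.mpr ⟨hxz, hxb⟩))
  have hinj : Set.InjOn g F := by
    intro z hz z' hz' heq
    obtain ⟨b, hb, hzb, hsub, hgz⟩ := hg z hz
    obtain ⟨b', hb', hzb', hsub', hgz'⟩ := hg z' hz'
    have hcard3 : b.card = 3 := (hS.1 b hb).2
    have hecard : (b.erase z).card = 2 := by
      rw [Finset.card_erase_of_mem hzb, hcard3]
    obtain ⟨q, r, hqr, he⟩ := Finset.card_eq_two.mp hecard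
    have heT : b.erase z ⊆ T := by
      intro x hx
      have hxz := Finset.mem_erase.mp hx
      rcases Finset.mem_insert.mp (hsub hxz.2) with h | h
      · exact absurd h hxz.1
      · exact h
    have hq : q ∈ b.erase z := he ▸ Finset.mem_insert_self _ _
    have hr : r ∈ b.erase z := he ▸ Finset.mem_insert_of_mem (Finset.mem_singleton_self _)
    have hqpts : q ∈ points := hTpts (heT hq)
    have hrpts : r ∈ points := hTpts (heT hr)
    have hqe' : q ∈ b'.erase z' := by rw [← hgz', ← heq, hgz]; exact hq
    have hre' : r ∈ b'.erase z' := by rw [← hgz', ← heq, hgz]; exact hr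
    have huniq := hS.2 q hqpts r hrpts hqr
    have hbb' : b = b' := huniq.unique
      ⟨hb, (Finset.mem_erase.mp hq).2, (Finset.mem_erase.mp hr).2⟩
      ⟨hb', (Finset.mem_erase.mp hqe').2, (Finset.mem_erase.mp hre').2⟩
    have hz'b : z' ∈ b := hbb' ▸ hzb'
    have hzi : z' ∈ insert z (b.erase z) := by rw [Finset.insert_erase hzb]; exact hz'b
    rcases Finset.mem_insert.mp hzi with h | h
    · exact h.symm
    · exfalso
      have : z' ∈ b'.erase z' := by rw [← hgz', ← heq, hgz]; exact h
      exact (Finset.mem_erase.mp this).1 rfl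
  have h1 : F.card ≤ (T.powersetCard 2 \ S.powersetCard 2).card :=
    Finset.card_le_card_of_injOn g hmaps hinj
  have h2 : (T.powersetCard 2 \ S.powersetCard 2).card
      = T.card.choose 2 - S.card.choose 2 := by
    rw [Finset.card_sdiff_of_subset (Finset.powersetCard_mono hST),
      Finset.card_powersetCard, Finset.card_powersetCard]
  have h3 : P.card ≤ F.card := Finset.card_le_card hPF
  omega

set_option maxHeartbeats 2000000 in
theorem stmt12 {α : Type*} [DecidableEq α] (points : Finset α) (blocks : Finset (Finset α))
    (hS : IsSTS points blocks) (hv : points.card = 25)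
    (A B C : Finset α) (hcol : IsColouring3 points blocks A B C)
    (hA : A.card = 11) (hB : B.card = 7) (hC : C.card = 7) :
    ∃ L : List α, IsGoodSeq points blocks 5 L := by
  classical
  obtain ⟨hunion, hdAB, hdAC, hdBC, hIA, hIB, hIC⟩ := hcol
  have hApts : A ⊆ points := by
    rw [← hunion]; exact Finset.subset_union_left.trans Finset.subset_union_left
  have hBpts : B ⊆ points := by
    rw [← hunion]; exact Finset.subset_union_right.trans Finset.subset_union_left
  have hCpts : C ⊆ points := by
    rw [← hunion]; exact Finset.subset_union_right
  have hABne : ∀ {x y : α}, x ∈ A → y ∈ B → x ≠ y :=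
    fun hx hy h => (Finset.disjoint_left.mp hdAB hx) (h ▸ hy)
  have hACne : ∀ {x y : α}, x ∈ A → y ∈ C → x ≠ y :=
    fun hx hy h => (Finset.disjoint_left.mp hdAC hx) (h ▸ hy)
  -- extract 4 distinguished elements of B
  obtain ⟨b4, hb4B⟩ := Finset.card_pos.mp (by rw [hB]; norm_num)
  set B1 := B.erase b4 with hB1
  have hB1c : B1.card = 6 := by rw [hB1, Finset.card_erase_of_mem hb4B, hB]
  obtain ⟨b5, hb5B1⟩ := Finset.card_pos.mp (by rw [hB1c]; norm_num)
  have hb5ne4 : b5 ≠ b4 := (Finset.mem_erase.mp hb5B1).1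
  have hb5B : b5 ∈ B := (Finset.mem_erase.mp hb5B1).2
  set B2 := B1.erase b5 with hB2
  have hB2c : B2.card = 5 := by rw [hB2, Finset.card_erase_of_mem hb5B1, hB1c]
  obtain ⟨b6, hb6B2⟩ := Finset.card_pos.mp (by rw [hB2c]; norm_num)
  have hb6ne5 : b6 ≠ b5 := (Finset.mem_erase.mp hb6B2).1
  have hb6B1 : b6 ∈ B1 := (Finset.mem_erase.mp hb6B2).2
  have hb6ne4 : b6 ≠ b4 := (Finset.mem_erase.mp hb6B1).1
  have hb6B : b6 ∈ B := (Finset.mem_erase.mp hb6B1).2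
  set B3 := B2.erase b6 with hB3
  have hB3c : B3.card = 4 := by rw [hB3, Finset.card_erase_of_mem hb6B2, hB2c]
  obtain ⟨b7, hb7B3⟩ := Finset.card_pos.mp (by rw [hB3c]; norm_num)
  have hb7ne6 : b7 ≠ b6 := (Finset.mem_erase.mp hb7B3).1
  have hb7B2 : b7 ∈ B2 := (Finset.mem_erase.mp hb7B3).2
  have hb7ne5 : b7 ≠ b5 := (Finset.mem_erase.mp hb7B2).1
  have hb7B1 : b7 ∈ B1 := (Finset.mem_erase.mp hb7B2).2
  have hb7ne4 : b7 ≠ b4 := (Finset.mem_erase.mp hb7B1).1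
  have hb7B : b7 ∈ B := (Finset.mem_erase.mp hb7B1).2
  set B4 := B3.erase b7 with hB4
  have hB4c : B4.card = 3 := by rw [hB4, Finset.card_erase_of_mem hb7B3, hB3c]
  have hB4len : B4.toList.length = 3 := by rw [Finset.length_toList, hB4c]
  obtain ⟨p1, p2, p3, hBl⟩ := List.length_eq_three.mp hB4len
  have hB4sub : B4 ⊆ B := by
    rw [hB4, hB3, hB2, hB1]
    exact ((((Finset.erase_subset _ _).trans (Finset.erase_subset _ _)).trans
      (Finset.erase_subset _ _)).trans (Finset.erase_subset _ _))
  have hp1B4 : p1 ∈ B4 := by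
    rw [← Finset.mem_toList, hBl]; simp
  have hp2B4 : p2 ∈ B4 := by
    rw [← Finset.mem_toList, hBl]; simp
  have hp3B4 : p3 ∈ B4 := by
    rw [← Finset.mem_toList, hBl]; simp
  have hp1B : p1 ∈ B := hB4sub hp1B4
  have hp2B : p2 ∈ B := hB4sub hp2B4
  have hp3B : p3 ∈ B := hB4sub hp3B4
  have hB4fs : ({p1, p2, p3} : Finset α) = B4 := by
    have h := Finset.toList_toFinset B4
    rw [hBl] at h
    simpa using h
  have hBeq : insert b4 (insert b5 (insert b6 (insert b7 ({p1,p2,p3} : Finset α)))) = B := by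
    rw [hB4fs, hB4, Finset.insert_erase hb7B3, hB3, Finset.insert_erase hb6B2, hB2,
      Finset.insert_erase hb5B1, hB1, Finset.insert_erase hb4B]
  -- extract 4 distinguished elements of C
  obtain ⟨c1, hc1C⟩ := Finset.card_pos.mp (by rw [hC]; norm_num)
  set C1 := C.erase c1 with hC1
  have hC1c : C1.card = 6 := by rw [hC1, Finset.card_erase_of_mem hc1C, hC]
  obtain ⟨c2, hc2C1⟩ := Finset.card_pos.mp (by rw [hC1c]; norm_num)
  have hc2ne1 : c2 ≠ c1 := (Finset.mem_erase.mp hc2C1).1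
  have hc2C : c2 ∈ C := (Finset.mem_erase.mp hc2C1).2
  set C2 := C1.erase c2 with hC2
  have hC2c : C2.card = 5 := by rw [hC2, Finset.card_erase_of_mem hc2C1, hC1c]
  obtain ⟨c3, hc3C2⟩ := Finset.card_pos.mp (by rw [hC2c]; norm_num)
  have hc3ne2 : c3 ≠ c2 := (Finset.mem_erase.mp hc3C2).1
  have hc3C1 : c3 ∈ C1 := (Finset.mem_erase.mp hc3C2).2
  have hc3ne1 : c3 ≠ c1 := (Finset.mem_erase.mp hc3C1).1
  have hc3C : c3 ∈ C := (Finset.mem_erase.mp hc3C1).2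
  set C3 := C2.erase c3 with hC3
  have hC3c : C3.card = 4 := by rw [hC3, Finset.card_erase_of_mem hc3C2, hC2c]
  obtain ⟨c4, hc4C3⟩ := Finset.card_pos.mp (by rw [hC3c]; norm_num)
  have hc4ne3 : c4 ≠ c3 := (Finset.mem_erase.mp hc4C3).1
  have hc4C2 : c4 ∈ C2 := (Finset.mem_erase.mp hc4C3).2
  have hc4ne2 : c4 ≠ c2 := (Finset.mem_erase.mp hc4C2).1
  have hc4C1 : c4 ∈ C1 := (Finset.mem_erase.mp hc4C2).2
  have hc4ne1 : c4 ≠ c1 := (Finset.mem_erase.mp hc4C1).1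
  have hc4C : c4 ∈ C := (Finset.mem_erase.mp hc4C1).2
  set C4 := C3.erase c4 with hC4
  have hC4c : C4.card = 3 := by rw [hC4, Finset.card_erase_of_mem hc4C3, hC3c]
  have hC4len : C4.toList.length = 3 := by rw [Finset.length_toList, hC4c]
  obtain ⟨q1, q2, q3, hCl⟩ := List.length_eq_three.mp hC4len
  have hC4sub : C4 ⊆ C := by
    rw [hC4, hC3, hC2, hC1]
    exact ((((Finset.erase_subset _ _).trans (Finset.erase_subset _ _)).trans
      (Finset.erase_subset _ _)).trans (Finset.erase_subset _ _))
  have hq1C4 : q1 ∈ C4 := by rw [← Finset.mem_toList, hCl]; simp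
  have hq2C4 : q2 ∈ C4 := by rw [← Finset.mem_toList, hCl]; simp
  have hq3C4 : q3 ∈ C4 := by rw [← Finset.mem_toList, hCl]; simp
  have hq1C : q1 ∈ C := hC4sub hq1C4
  have hq2C : q2 ∈ C := hC4sub hq2C4
  have hq3C : q3 ∈ C := hC4sub hq3C4
  have hC4fs : ({q1, q2, q3} : Finset α) = C4 := by
    have h := Finset.toList_toFinset C4
    rw [hCl] at h
    simpa using h
  have hCeq : insert c1 (insert c2 (insert c3 (insert c4 ({q1,q2,q3} : Finset α)))) = C := by
    rw [hC4fs, hC4, Finset.insert_erase hc4C3, hC3, Finset.insert_erase hc3C2, hC2,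
      Finset.insert_erase hc2C1, hC1, Finset.insert_erase hc1C]
  -- T-set cards
  have hT1c : ({b4,b5,b6,b7} : Finset α).card = 4 :=
    card4' hb5ne4.symm hb6ne4.symm hb7ne4.symm hb6ne5.symm hb7ne5.symm hb7ne6.symm
  have hTc1c : ({c1,c2,c3,c4} : Finset α).card = 4 :=
    card4' hc2ne1.symm hc3ne1.symm hc4ne1.symm hc3ne2.symm hc4ne2.symm hc4ne3.symm
  -- pick l1
  obtain ⟨l1, hl1A, hl1⟩ := pick_lemma hS hIA A {b4,b5,b6,b7} ∅ (Finset.Subset.refl A)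
    (by simp only [Finset.insert_subset_iff, Finset.singleton_subset_iff]
        exact ⟨hBpts hb4B, hBpts hb5B, hBpts hb6B, hBpts hb7B⟩)
    (Finset.empty_subset _) (Finset.empty_subset _)
    (by rw [hT1c, hA]; simp only [Finset.card_empty]; decide)
  -- pick r1
  set P2 := A.erase l1 with hP2
  have hP2c : P2.card = 10 := by rw [hP2, Finset.card_erase_of_mem hl1A, hA]
  have hP2A : P2 ⊆ A := by rw [hP2]; exact Finset.erase_subset _ _
  obtain ⟨r1, hr1P2, hr1⟩ := pick_lemma hS hIA P2 {c1,c2,c3,c4} ∅ hP2A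
    (by simp only [Finset.insert_subset_iff, Finset.singleton_subset_iff]
        exact ⟨hCpts hc1C, hCpts hc2C, hCpts hc3C, hCpts hc4C⟩)
    (Finset.empty_subset _) (Finset.empty_subset _)
    (by rw [hTc1c, hP2c]; simp only [Finset.card_empty]; decide)
  have hr1nl1 : r1 ≠ l1 := by
    have h := hr1P2; rw [hP2, Finset.mem_erase] at h; exact h.1
  have hr1A : r1 ∈ A := by
    have h := hr1P2; rw [hP2, Finset.mem_erase] at h; exact h.2
  -- pick l2
  set P3 := P2.erase r1 with hP3
  have hP3c : P3.card = 9 := by rw [hP3, Finset.card_erase_of_mem hr1P2, hP2c]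
  have hP3A : P3 ⊆ A := by rw [hP3]; exact (Finset.erase_subset _ _).trans hP2A
  have hT2c : ({b5,b6,b7,l1} : Finset α).card = 4 :=
    card4' hb6ne5.symm hb7ne5.symm (hABne hl1A hb5B).symm hb7ne6.symm
      (hABne hl1A hb6B).symm (hABne hl1A hb7B).symm
  obtain ⟨l2, hl2P3, hl2⟩ := pick_lemma hS hIA P3 {b5,b6,b7,l1} {l1} hP3A
    (by simp only [Finset.insert_subset_iff, Finset.singleton_subset_iff]
        exact ⟨hBpts hb5B, hBpts hb6B, hBpts hb7B, hApts hl1A⟩)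
    (by intro x hx; simp at hx; simp [hx])
    (by simp [hl1A])
    (by rw [hT2c, hP3c]; simp only [Finset.card_singleton]; decide)
  have hl2nr1 : l2 ≠ r1 := by
    have h := hl2P3; rw [hP3, Finset.mem_erase] at h; exact h.1
  have hl2P2 : l2 ∈ P2 := by
    have h := hl2P3; rw [hP3, Finset.mem_erase] at h; exact h.2
  have hl2nl1 : l2 ≠ l1 := by
    have h := hl2P2; rw [hP2, Finset.mem_erase] at h; exact h.1
  have hl2A : l2 ∈ A := hP3A hl2P3
  -- pick r2
  set P4 := P3.erase l2 with hP4
  have hP4c : P4.card = 8 := by rw [hP4, Finset.card_erase_of_mem hl2P3, hP3c]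
  have hP4A : P4 ⊆ A := by rw [hP4]; exact (Finset.erase_subset _ _).trans hP3A
  have hT3c : ({r1,c1,c2,c3} : Finset α).card = 4 :=
    card4' (hACne hr1A hc1C) (hACne hr1A hc2C) (hACne hr1A hc3C)
      hc2ne1.symm hc3ne1.symm hc3ne2.symm
  obtain ⟨r2, hr2P4, hr2⟩ := pick_lemma hS hIA P4 {r1,c1,c2,c3} {r1} hP4A
    (by simp only [Finset.insert_subset_iff, Finset.singleton_subset_iff]
        exact ⟨hApts hr1A, hCpts hc1C, hCpts hc2C, hCpts hc3C⟩)
    (by simp)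
    (by simp [hr1A])
    (by rw [hT3c, hP4c]; simp only [Finset.card_singleton]; decide)
  have hr2nl2 : r2 ≠ l2 := by
    have h := hr2P4; rw [hP4, Finset.mem_erase] at h; exact h.1
  have hr2P3 : r2 ∈ P3 := by
    have h := hr2P4; rw [hP4, Finset.mem_erase] at h; exact h.2
  have hr2nr1 : r2 ≠ r1 := by
    have h := hr2P3; rw [hP3, Finset.mem_erase] at h; exact h.1
  have hr2A : r2 ∈ A := hP4A hr2P4
  -- pick l3
  set P5 := P4.erase r2 with hP5
  have hP5c : P5.card = 7 := by rw [hP5, Finset.card_erase_of_mem hr2P4, hP4c]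
  have hP5A : P5 ⊆ A := by rw [hP5]; exact (Finset.erase_subset _ _).trans hP4A
  have hT4c : ({b6,b7,l1,l2} : Finset α).card = 4 :=
    card4' hb7ne6.symm (hABne hl1A hb6B).symm (hABne hl2A hb6B).symm
      (hABne hl1A hb7B).symm (hABne hl2A hb7B).symm hl2nl1.symm
  have hS2c : ({l1,l2} : Finset α).card = 2 := card2' hl2nl1.symm
  obtain ⟨l3, hl3P5, hl3⟩ := pick_lemma hS hIA P5 {b6,b7,l1,l2} {l1,l2} hP5A
    (by simp only [Finset.insert_subset_iff, Finset.singleton_subset_iff]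
        exact ⟨hBpts hb6B, hBpts hb7B, hApts hl1A, hApts hl2A⟩)
    (by intro x hx; simp only [Finset.mem_insert, Finset.mem_singleton] at hx ⊢
        rcases hx with h|h
        exacts [Or.inr (Or.inr (Or.inl h)), Or.inr (Or.inr (Or.inr (h)))])
    (by intro x hx; simp at hx; rcases hx with rfl | rfl <;> assumption)
    (by rw [hT4c, hS2c, hP5c]; decide)
  have hl3nr2 : l3 ≠ r2 := by
    have h := hl3P5; rw [hP5, Finset.mem_erase] at h; exact h.1
  have hl3P4 : l3 ∈ P4 := by
    have h := hl3P5; rw [hP5, Finset.mem_erase] at h; exact h.2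
  have hl3nl2 : l3 ≠ l2 := by
    have h := hl3P4; rw [hP4, Finset.mem_erase] at h; exact h.1
  have hl3P3 : l3 ∈ P3 := by
    have h := hl3P4; rw [hP4, Finset.mem_erase] at h; exact h.2
  have hl3nr1 : l3 ≠ r1 := by
    have h := hl3P3; rw [hP3, Finset.mem_erase] at h; exact h.1
  have hl3P2 : l3 ∈ P2 := by
    have h := hl3P3; rw [hP3, Finset.mem_erase] at h; exact h.2
  have hl3nl1 : l3 ≠ l1 := by
    have h := hl3P2; rw [hP2, Finset.mem_erase] at h; exact h.1
  have hl3A : l3 ∈ A := hP5A hl3P5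
  -- pick r3
  set P6 := P5.erase l3 with hP6
  have hP6c : P6.card = 6 := by rw [hP6, Finset.card_erase_of_mem hl3P5, hP5c]
  have hP6A : P6 ⊆ A := by rw [hP6]; exact (Finset.erase_subset _ _).trans hP5A
  have hT5c : ({r2,r1,c1,c2} : Finset α).card = 4 :=
    card4' hr2nr1 (hACne hr2A hc1C) (hACne hr2A hc2C)
      (hACne hr1A hc1C) (hACne hr1A hc2C) hc2ne1.symm
  have hS3c : ({r1,r2} : Finset α).card = 2 := card2' hr2nr1.symm
  obtain ⟨r3, hr3P6, hr3⟩ := pick_lemma hS hIA P6 {r2,r1,c1,c2} {r1,r2} hP6A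
    (by simp only [Finset.insert_subset_iff, Finset.singleton_subset_iff]
        exact ⟨hApts hr2A, hApts hr1A, hCpts hc1C, hCpts hc2C⟩)
    (by intro x hx; simp only [Finset.mem_insert, Finset.mem_singleton] at hx ⊢
        rcases hx with h|h
        exacts [Or.inr (Or.inl h), Or.inl h])
    (by intro x hx; simp at hx; rcases hx with rfl | rfl <;> assumption)
    (by rw [hT5c, hS3c, hP6c]; decide)
  have hr3nl3 : r3 ≠ l3 := by
    have h := hr3P6; rw [hP6, Finset.mem_erase] at h; exact h.1
  have hr3P5 : r3 ∈ P5 := by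
    have h := hr3P6; rw [hP6, Finset.mem_erase] at h; exact h.2
  have hr3nr2 : r3 ≠ r2 := by
    have h := hr3P5; rw [hP5, Finset.mem_erase] at h; exact h.1
  have hr3P4 : r3 ∈ P4 := by
    have h := hr3P5; rw [hP5, Finset.mem_erase] at h; exact h.2
  have hr3nl2 : r3 ≠ l2 := by
    have h := hr3P4; rw [hP4, Finset.mem_erase] at h; exact h.1
  have hr3P3 : r3 ∈ P3 := by
    have h := hr3P4; rw [hP4, Finset.mem_erase] at h; exact h.2
  have hr3nr1 : r3 ≠ r1 := by
    have h := hr3P3; rw [hP3, Finset.mem_erase] at h; exact h.1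
  have hr3P2 : r3 ∈ P3 := hr3P3
  have hr3A : r3 ∈ A := hP6A hr3P6
  -- pick l4
  set P7 := P6.erase r3 with hP7
  have hP7c : P7.card = 5 := by rw [hP7, Finset.card_erase_of_mem hr3P6, hP6c]
  have hP7A : P7 ⊆ A := by rw [hP7]; exact (Finset.erase_subset _ _).trans hP6A
  have hT6c : ({b7,l1,l2,l3} : Finset α).card = 4 :=
    card4' (hABne hl1A hb7B).symm (hABne hl2A hb7B).symm (hABne hl3A hb7B).symm
      hl2nl1.symm hl3nl1.symm hl3nl2.symm
  have hS4c : ({l1,l2,l3} : Finset α).card = 3 := card3' hl2nl1.symm hl3nl1.symm hl3nl2.symm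
  obtain ⟨l4, hl4P7, hl4⟩ := pick_lemma hS hIA P7 {b7,l1,l2,l3} {l1,l2,l3} hP7A
    (by simp only [Finset.insert_subset_iff, Finset.singleton_subset_iff]
        exact ⟨hBpts hb7B, hApts hl1A, hApts hl2A, hApts hl3A⟩)
    (by intro x hx; simp only [Finset.mem_insert, Finset.mem_singleton] at hx ⊢
        rcases hx with h|h|h
        exacts [Or.inr (Or.inl h), Or.inr (Or.inr (Or.inl h)), Or.inr (Or.inr (Or.inr (h)))])
    (by intro x hx; simp at hx; rcases hx with rfl | rfl | rfl <;> assumption)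
    (by rw [hT6c, hS4c, hP7c]; decide)
  have hl4A : l4 ∈ A := hP7A hl4P7
  -- pick r4
  set P8 := P7.erase l4 with hP8
  have hP8c : P8.card = 4 := by rw [hP8, Finset.card_erase_of_mem hl4P7, hP7c]
  have hP8A : P8 ⊆ A := by rw [hP8]; exact (Finset.erase_subset _ _).trans hP7A
  have hT7c : ({r3,r2,r1,c1} : Finset α).card = 4 :=
    card4' hr3nr2 hr3nr1 (hACne hr3A hc1C) hr2nr1 (hACne hr2A hc1C) (hACne hr1A hc1C)
  have hS5c : ({r1,r2,r3} : Finset α).card = 3 := card3' hr2nr1.symm hr3nr1.symm hr3nr2.symm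
  obtain ⟨r4, hr4P8, hr4⟩ := pick_lemma hS hIA P8 {r3,r2,r1,c1} {r1,r2,r3} hP8A
    (by simp only [Finset.insert_subset_iff, Finset.singleton_subset_iff]
        exact ⟨hApts hr3A, hApts hr2A, hApts hr1A, hCpts hc1C⟩)
    (by intro x hx; simp only [Finset.mem_insert, Finset.mem_singleton] at hx ⊢
        rcases hx with h|h|h
        exacts [Or.inr (Or.inr (Or.inl h)), Or.inr (Or.inl h), Or.inl h])
    (by intro x hx; simp at hx; rcases hx with rfl | rfl | rfl <;> assumption)
    (by rw [hT7c, hS5c, hP8c]; decide)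
  have hr4A : r4 ∈ A := hP8A hr4P8
  -- the three remaining A points
  set M := P8.erase r4 with hM
  have hMc : M.card = 3 := by rw [hM, Finset.card_erase_of_mem hr4P8, hP8c]
  have hMA : M ⊆ A := by rw [hM]; exact (Finset.erase_subset _ _).trans hP8A
  have hMlen : M.toList.length = 3 := by rw [Finset.length_toList, hMc]
  obtain ⟨m1, m2, m3, hMl⟩ := List.length_eq_three.mp hMlen
  have hm1M : m1 ∈ M := by rw [← Finset.mem_toList, hMl]; simp
  have hm2M : m2 ∈ M := by rw [← Finset.mem_toList, hMl]; simp
  have hm3M : m3 ∈ M := by rw [← Finset.mem_toList, hMl]; simp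
  have hm1A : m1 ∈ A := hMA hm1M
  have hm2A : m2 ∈ A := hMA hm2M
  have hm3A : m3 ∈ A := hMA hm3M
  have hMfs : ({m1, m2, m3} : Finset α) = M := by
    have h := Finset.toList_toFinset M
    rw [hMl] at h
    simpa using h
  have hAeq : insert l1 (insert r1 (insert l2 (insert r2 (insert l3 (insert r3
      (insert l4 (insert r4 ({m1,m2,m3} : Finset α)))))))) = A := by
    rw [hMfs, hM, Finset.insert_erase hr4P8, hP8, Finset.insert_erase hl4P7, hP7,
      Finset.insert_erase hr3P6, hP6, Finset.insert_erase hl3P5, hP5,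
      Finset.insert_erase hr2P4, hP4, Finset.insert_erase hl2P3, hP3,
      Finset.insert_erase hr1P2, hP2, Finset.insert_erase hl1A]
  -- the sequence
  obtain ⟨L, hLdef⟩ : ∃ L : List α,
      L = [p1, p2, p3, b4, b5, b6, b7, l1, l2, l3, l4, m1, m2, m3,
           r4, r3, r2, r1, c1, c2, c3, c4, q1, q2, q3] := ⟨_, rfl⟩
  have hLlen : L.length = 25 := by rw [hLdef]; rfl
  have hLmem : ∀ y : α, y ∈ ({p1,p2,p3,b4,b5,b6,b7,l1,l2,l3,l4,m1,m2,m3,r4,r3,r2,r1,c1,c2,c3,c4,q1,q2,q3} : Finset α) → y ∈ L.toFinset := by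
    rw [hLdef]
    intro y hy
    simpa using hy
  have htf : L.toFinset = points := by
    apply Finset.Subset.antisymm
    · intro x hx
      rw [hLdef] at hx
      simp only [List.toFinset_cons, List.toFinset_nil, insert_empty_eq,
        Finset.mem_insert, Finset.mem_singleton] at hx
      rcases hx with h|h|h|h|h|h|h|h|h|h|h|h|h|h|h|h|h|h|h|h|h|h|h|h|h
      exacts [h ▸ hBpts hp1B, h ▸ hBpts hp2B, h ▸ hBpts hp3B, h ▸ hBpts hb4B,
        h ▸ hBpts hb5B, h ▸ hBpts hb6B, h ▸ hBpts hb7B, h ▸ hApts hl1A,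
        h ▸ hApts hl2A, h ▸ hApts hl3A, h ▸ hApts hl4A, h ▸ hApts hm1A,
        h ▸ hApts hm2A, h ▸ hApts hm3A, h ▸ hApts hr4A, h ▸ hApts hr3A,
        h ▸ hApts hr2A, h ▸ hApts hr1A, h ▸ hCpts hc1C, h ▸ hCpts hc2C,
        h ▸ hCpts hc3C, h ▸ hCpts hc4C, h ▸ hCpts hq1C, h ▸ hCpts hq2C,
        h ▸ hCpts hq3C]
    · rw [← hunion]
      refine Finset.union_subset (Finset.union_subset ?_ ?_) ?_
      · rw [← hAeq]
        intro x hx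
        refine hLmem x ?_
        simp only [Finset.mem_insert, Finset.mem_singleton] at hx ⊢
        rcases hx with h|h|h|h|h|h|h|h|h|h|h
        exacts [Or.inr (Or.inr (Or.inr (Or.inr (Or.inr (Or.inr (Or.inr (Or.inl h))))))),
          Or.inr (Or.inr (Or.inr (Or.inr (Or.inr (Or.inr (Or.inr (Or.inr (Or.inr (Or.inr (Or.inr (Or.inr (Or.inr (Or.inr (Or.inr (Or.inr (Or.inr (Or.inl h))))))))))))))))),
          Or.inr (Or.inr (Or.inr (Or.inr (Or.inr (Or.inr (Or.inr (Or.inr (Or.inl h)))))))),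
          Or.inr (Or.inr (Or.inr (Or.inr (Or.inr (Or.inr (Or.inr (Or.inr (Or.inr (Or.inr (Or.inr (Or.inr (Or.inr (Or.inr (Or.inr (Or.inr (Or.inl h)))))))))))))))),
          Or.inr (Or.inr (Or.inr (Or.inr (Or.inr (Or.inr (Or.inr (Or.inr (Or.inr (Or.inl h))))))))),
          Or.inr (Or.inr (Or.inr (Or.inr (Or.inr (Or.inr (Or.inr (Or.inr (Or.inr (Or.inr (Or.inr (Or.inr (Or.inr (Or.inr (Or.inr (Or.inl h))))))))))))))),
          Or.inr (Or.inr (Or.inr (Or.inr (Or.inr (Or.inr (Or.inr (Or.inr (Or.inr (Or.inr (Or.inl h)))))))))),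
          Or.inr (Or.inr (Or.inr (Or.inr (Or.inr (Or.inr (Or.inr (Or.inr (Or.inr (Or.inr (Or.inr (Or.inr (Or.inr (Or.inr (Or.inl h)))))))))))))),
          Or.inr (Or.inr (Or.inr (Or.inr (Or.inr (Or.inr (Or.inr (Or.inr (Or.inr (Or.inr (Or.inr (Or.inl h))))))))))),
          Or.inr (Or.inr (Or.inr (Or.inr (Or.inr (Or.inr (Or.inr (Or.inr (Or.inr (Or.inr (Or.inr (Or.inr (Or.inl h)))))))))))),
          Or.inr (Or.inr (Or.inr (Or.inr (Or.inr (Or.inr (Or.inr (Or.inr (Or.inr (Or.inr (Or.inr (Or.inr (Or.inr (Or.inl h)))))))))))))]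
      · rw [← hBeq]
        intro x hx
        refine hLmem x ?_
        simp only [Finset.mem_insert, Finset.mem_singleton] at hx ⊢
        rcases hx with h|h|h|h|h|h|h
        exacts [Or.inr (Or.inr (Or.inr (Or.inl h))),
          Or.inr (Or.inr (Or.inr (Or.inr (Or.inl h)))),
          Or.inr (Or.inr (Or.inr (Or.inr (Or.inr (Or.inl h))))),
          Or.inr (Or.inr (Or.inr (Or.inr (Or.inr (Or.inr (Or.inl h)))))),
          Or.inl h, Or.inr (Or.inl h), Or.inr (Or.inr (Or.inl h))]
      · rw [← hCeq]
        intro x hx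
        refine hLmem x ?_
        simp only [Finset.mem_insert, Finset.mem_singleton] at hx ⊢
        rcases hx with h|h|h|h|h|h|h
        exacts [Or.inr (Or.inr (Or.inr (Or.inr (Or.inr (Or.inr (Or.inr (Or.inr (Or.inr (Or.inr (Or.inr (Or.inr (Or.inr (Or.inr (Or.inr (Or.inr (Or.inr (Or.inr (Or.inl h)))))))))))))))))),
          Or.inr (Or.inr (Or.inr (Or.inr (Or.inr (Or.inr (Or.inr (Or.inr (Or.inr (Or.inr (Or.inr (Or.inr (Or.inr (Or.inr (Or.inr (Or.inr (Or.inr (Or.inr (Or.inr (Or.inl h))))))))))))))))))),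
          Or.inr (Or.inr (Or.inr (Or.inr (Or.inr (Or.inr (Or.inr (Or.inr (Or.inr (Or.inr (Or.inr (Or.inr (Or.inr (Or.inr (Or.inr (Or.inr (Or.inr (Or.inr (Or.inr (Or.inr (Or.inl h)))))))))))))))))))),
          Or.inr (Or.inr (Or.inr (Or.inr (Or.inr (Or.inr (Or.inr (Or.inr (Or.inr (Or.inr (Or.inr (Or.inr (Or.inr (Or.inr (Or.inr (Or.inr (Or.inr (Or.inr (Or.inr (Or.inr (Or.inr (Or.inl h))))))))))))))))))))),
          Or.inr (Or.inr (Or.inr (Or.inr (Or.inr (Or.inr (Or.inr (Or.inr (Or.inr (Or.inr (Or.inr (Or.inr (Or.inr (Or.inr (Or.inr (Or.inr (Or.inr (Or.inr (Or.inr (Or.inr (Or.inr (Or.inr (Or.inl h)))))))))))))))))))))),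
          Or.inr (Or.inr (Or.inr (Or.inr (Or.inr (Or.inr (Or.inr (Or.inr (Or.inr (Or.inr (Or.inr (Or.inr (Or.inr (Or.inr (Or.inr (Or.inr (Or.inr (Or.inr (Or.inr (Or.inr (Or.inr (Or.inr (Or.inr (Or.inl h))))))))))))))))))))))),
          Or.inr (Or.inr (Or.inr (Or.inr (Or.inr (Or.inr (Or.inr (Or.inr (Or.inr (Or.inr (Or.inr (Or.inr (Or.inr (Or.inr (Or.inr (Or.inr (Or.inr (Or.inr (Or.inr (Or.inr (Or.inr (Or.inr (Or.inr (Or.inr h)))))))))))))))))))))))]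
  have hnd : L.Nodup := by
    have h1 : L.toFinset.card = 25 := by rw [htf, hv]
    rw [List.card_toFinset] at h1
    have h3 : L.dedup = L := (List.dedup_sublist L).eq_of_length (by rw [h1, hLlen])
    exact List.dedup_eq_self.mp h3
  refine ⟨L, hnd, htf, ?_⟩
  -- window equations
  have hw0 : (L.drop 0).take 5 = [p1,p2,p3,b4,b5] := by rw [hLdef]; rfl
  have hw1 : (L.drop 1).take 5 = [p2,p3,b4,b5,b6] := by rw [hLdef]; rfl
  have hw2 : (L.drop 2).take 5 = [p3,b4,b5,b6,b7] := by rw [hLdef]; rfl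
  have hw3 : (L.drop 3).take 5 = [b4,b5,b6,b7,l1] := by rw [hLdef]; rfl
  have hw4 : (L.drop 4).take 5 = [b5,b6,b7,l1,l2] := by rw [hLdef]; rfl
  have hw5 : (L.drop 5).take 5 = [b6,b7,l1,l2,l3] := by rw [hLdef]; rfl
  have hw6 : (L.drop 6).take 5 = [b7,l1,l2,l3,l4] := by rw [hLdef]; rfl
  have hw7 : (L.drop 7).take 5 = [l1,l2,l3,l4,m1] := by rw [hLdef]; rfl
  have hw8 : (L.drop 8).take 5 = [l2,l3,l4,m1,m2] := by rw [hLdef]; rfl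
  have hw9 : (L.drop 9).take 5 = [l3,l4,m1,m2,m3] := by rw [hLdef]; rfl
  have hw10 : (L.drop 10).take 5 = [l4,m1,m2,m3,r4] := by rw [hLdef]; rfl
  have hw11 : (L.drop 11).take 5 = [m1,m2,m3,r4,r3] := by rw [hLdef]; rfl
  have hw12 : (L.drop 12).take 5 = [m2,m3,r4,r3,r2] := by rw [hLdef]; rfl
  have hw13 : (L.drop 13).take 5 = [m3,r4,r3,r2,r1] := by rw [hLdef]; rfl
  have hw14 : (L.drop 14).take 5 = [r4,r3,r2,r1,c1] := by rw [hLdef]; rfl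
  have hw15 : (L.drop 15).take 5 = [r3,r2,r1,c1,c2] := by rw [hLdef]; rfl
  have hw16 : (L.drop 16).take 5 = [r2,r1,c1,c2,c3] := by rw [hLdef]; rfl
  have hw17 : (L.drop 17).take 5 = [r1,c1,c2,c3,c4] := by rw [hLdef]; rfl
  have hw18 : (L.drop 18).take 5 = [c1,c2,c3,c4,q1] := by rw [hLdef]; rfl
  have hw19 : (L.drop 19).take 5 = [c2,c3,c4,q1,q2] := by rw [hLdef]; rfl
  have hw20 : (L.drop 20).take 5 = [c3,c4,q1,q2,q3] := by rw [hLdef]; rfl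
  have hw21 : (L.drop 21).take 5 = [c4,q1,q2,q3] := by rw [hLdef]; rfl
  have hw22 : (L.drop 22).take 5 = [q1,q2,q3] := by rw [hLdef]; rfl
  have hw23 : (L.drop 23).take 5 = [q2,q3] := by rw [hLdef]; rfl
  have hw24 : (L.drop 24).take 5 = [q3] := by rw [hLdef]; rfl
  intro i b hb
  have hb3 : b.card = 3 := (hS.1 b hb).2
  rcases lt_or_ge i 25 with hi | hi
  · interval_cases i
    · rw [hw0]
      intro hsub
      refine hIB b hb (fun x hx => ?_)
      have h := hsub hx; simp at h
      rcases h with rfl|rfl|rfl|rfl|rfl <;> assumption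
    · rw [hw1]
      intro hsub
      refine hIB b hb (fun x hx => ?_)
      have h := hsub hx; simp at h
      rcases h with rfl|rfl|rfl|rfl|rfl <;> assumption
    · rw [hw2]
      intro hsub
      refine hIB b hb (fun x hx => ?_)
      have h := hsub hx; simp at h
      rcases h with rfl|rfl|rfl|rfl|rfl <;> assumption
    · -- window 3
      rw [hw3]
      intro hsub
      by_cases hcl1 : l1 ∈ b
      · refine hl1 b hb hcl1 (fun x hx => ?_)
        have h2 := hsub hx
        simp only [List.toFinset_cons, List.toFinset_nil, insert_empty_eq,
        Finset.mem_insert, Finset.mem_singleton] at h2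
        simp only [Finset.mem_insert, Finset.mem_singleton]
        rcases h2 with h|h|h|h|h
        exacts [Or.inr (Or.inl h), Or.inr (Or.inr (Or.inl h)), Or.inr (Or.inr (Or.inr (Or.inl h))), Or.inr (Or.inr (Or.inr (Or.inr (h)))), Or.inl h]
      refine hIB b hb (fun x hx => ?_)
      have h2 := hsub hx
      simp only [List.toFinset_cons, List.toFinset_nil, insert_empty_eq,
        Finset.mem_insert, Finset.mem_singleton] at h2
      rcases h2 with h|h|h|h|h
      exacts [h ▸ hb4B, h ▸ hb5B, h ▸ hb6B, h ▸ hb7B, absurd (h ▸ hx) hcl1]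
    · -- window 4
      rw [hw4]
      intro hsub
      by_cases hcl2 : l2 ∈ b
      · refine hl2 b hb hcl2 (fun x hx => ?_)
        have h2 := hsub hx
        simp only [List.toFinset_cons, List.toFinset_nil, insert_empty_eq,
        Finset.mem_insert, Finset.mem_singleton] at h2
        simp only [Finset.mem_insert, Finset.mem_singleton]
        rcases h2 with h|h|h|h|h
        exacts [Or.inr (Or.inl h), Or.inr (Or.inr (Or.inl h)), Or.inr (Or.inr (Or.inr (Or.inl h))), Or.inr (Or.inr (Or.inr (Or.inr (h)))), Or.inl h]
      by_cases hcl1 : l1 ∈ b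
      · refine hl1 b hb hcl1 (fun x hx => ?_)
        have h2 := hsub hx
        simp only [List.toFinset_cons, List.toFinset_nil, insert_empty_eq,
        Finset.mem_insert, Finset.mem_singleton] at h2
        simp only [Finset.mem_insert, Finset.mem_singleton]
        rcases h2 with h|h|h|h|h
        exacts [Or.inr (Or.inr (Or.inl h)), Or.inr (Or.inr (Or.inr (Or.inl h))), Or.inr (Or.inr (Or.inr (Or.inr (h)))), Or.inl h, absurd (h ▸ hx) hcl2]
      refine hIB b hb (fun x hx => ?_)
      have h2 := hsub hx
      simp only [List.toFinset_cons, List.toFinset_nil, insert_empty_eq,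
        Finset.mem_insert, Finset.mem_singleton] at h2
      rcases h2 with h|h|h|h|h
      exacts [h ▸ hb5B, h ▸ hb6B, h ▸ hb7B, absurd (h ▸ hx) hcl1, absurd (h ▸ hx) hcl2]
    · -- window 5
      rw [hw5]
      intro hsub
      by_cases hcl3 : l3 ∈ b
      · refine hl3 b hb hcl3 (fun x hx => ?_)
        have h2 := hsub hx
        simp only [List.toFinset_cons, List.toFinset_nil, insert_empty_eq,
        Finset.mem_insert, Finset.mem_singleton] at h2
        simp only [Finset.mem_insert, Finset.mem_singleton]
        rcases h2 with h|h|h|h|h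
        exacts [Or.inr (Or.inl h), Or.inr (Or.inr (Or.inl h)), Or.inr (Or.inr (Or.inr (Or.inl h))), Or.inr (Or.inr (Or.inr (Or.inr (h)))), Or.inl h]
      by_cases hcl2 : l2 ∈ b
      · refine hl2 b hb hcl2 (fun x hx => ?_)
        have h2 := hsub hx
        simp only [List.toFinset_cons, List.toFinset_nil, insert_empty_eq,
        Finset.mem_insert, Finset.mem_singleton] at h2
        simp only [Finset.mem_insert, Finset.mem_singleton]
        rcases h2 with h|h|h|h|h
        exacts [Or.inr (Or.inr (Or.inl h)), Or.inr (Or.inr (Or.inr (Or.inl h))), Or.inr (Or.inr (Or.inr (Or.inr (h)))), Or.inl h, absurd (h ▸ hx) hcl3]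
      by_cases hcl1 : l1 ∈ b
      · refine hl1 b hb hcl1 (fun x hx => ?_)
        have h2 := hsub hx
        simp only [List.toFinset_cons, List.toFinset_nil, insert_empty_eq,
        Finset.mem_insert, Finset.mem_singleton] at h2
        simp only [Finset.mem_insert, Finset.mem_singleton]
        rcases h2 with h|h|h|h|h
        exacts [Or.inr (Or.inr (Or.inr (Or.inl h))), Or.inr (Or.inr (Or.inr (Or.inr (h)))), Or.inl h, absurd (h ▸ hx) hcl2, absurd (h ▸ hx) hcl3]
      refine hIB b hb (fun x hx => ?_)
      have h2 := hsub hx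
      simp only [List.toFinset_cons, List.toFinset_nil, insert_empty_eq,
        Finset.mem_insert, Finset.mem_singleton] at h2
      rcases h2 with h|h|h|h|h
      exacts [h ▸ hb6B, h ▸ hb7B, absurd (h ▸ hx) hcl1, absurd (h ▸ hx) hcl2, absurd (h ▸ hx) hcl3]
    · -- window 6
      rw [hw6]
      intro hsub
      by_cases hcl4 : l4 ∈ b
      · refine hl4 b hb hcl4 (fun x hx => ?_)
        have h2 := hsub hx
        simp only [List.toFinset_cons, List.toFinset_nil, insert_empty_eq,
        Finset.mem_insert, Finset.mem_singleton] at h2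
        simp only [Finset.mem_insert, Finset.mem_singleton]
        rcases h2 with h|h|h|h|h
        exacts [Or.inr (Or.inl h), Or.inr (Or.inr (Or.inl h)), Or.inr (Or.inr (Or.inr (Or.inl h))), Or.inr (Or.inr (Or.inr (Or.inr (h)))), Or.inl h]
      by_cases hcl3 : l3 ∈ b
      · refine hl3 b hb hcl3 (fun x hx => ?_)
        have h2 := hsub hx
        simp only [List.toFinset_cons, List.toFinset_nil, insert_empty_eq,
        Finset.mem_insert, Finset.mem_singleton] at h2
        simp only [Finset.mem_insert, Finset.mem_singleton]
        rcases h2 with h|h|h|h|h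
        exacts [Or.inr (Or.inr (Or.inl h)), Or.inr (Or.inr (Or.inr (Or.inl h))), Or.inr (Or.inr (Or.inr (Or.inr (h)))), Or.inl h, absurd (h ▸ hx) hcl4]
      by_cases hcl2 : l2 ∈ b
      · refine hl2 b hb hcl2 (fun x hx => ?_)
        have h2 := hsub hx
        simp only [List.toFinset_cons, List.toFinset_nil, insert_empty_eq,
        Finset.mem_insert, Finset.mem_singleton] at h2
        simp only [Finset.mem_insert, Finset.mem_singleton]
        rcases h2 with h|h|h|h|h
        exacts [Or.inr (Or.inr (Or.inr (Or.inl h))), Or.inr (Or.inr (Or.inr (Or.inr (h)))), Or.inl h, absurd (h ▸ hx) hcl3, absurd (h ▸ hx) hcl4]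
      by_cases hcl1 : l1 ∈ b
      · refine hl1 b hb hcl1 (fun x hx => ?_)
        have h2 := hsub hx
        simp only [List.toFinset_cons, List.toFinset_nil, insert_empty_eq,
        Finset.mem_insert, Finset.mem_singleton] at h2
        simp only [Finset.mem_insert, Finset.mem_singleton]
        rcases h2 with h|h|h|h|h
        exacts [Or.inr (Or.inr (Or.inr (Or.inr (h)))), Or.inl h, absurd (h ▸ hx) hcl2, absurd (h ▸ hx) hcl3, absurd (h ▸ hx) hcl4]
      refine hIB b hb (fun x hx => ?_)
      have h2 := hsub hx
      simp only [List.toFinset_cons, List.toFinset_nil, insert_empty_eq,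
        Finset.mem_insert, Finset.mem_singleton] at h2
      rcases h2 with h|h|h|h|h
      exacts [h ▸ hb7B, absurd (h ▸ hx) hcl1, absurd (h ▸ hx) hcl2, absurd (h ▸ hx) hcl3, absurd (h ▸ hx) hcl4]
    · rw [hw7]
      intro hsub
      refine hIA b hb (fun x hx => ?_)
      have h := hsub hx; simp at h
      rcases h with rfl|rfl|rfl|rfl|rfl <;> assumption
    · rw [hw8]
      intro hsub
      refine hIA b hb (fun x hx => ?_)
      have h := hsub hx; simp at h
      rcases h with rfl|rfl|rfl|rfl|rfl <;> assumption
    · rw [hw9]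
      intro hsub
      refine hIA b hb (fun x hx => ?_)
      have h := hsub hx; simp at h
      rcases h with rfl|rfl|rfl|rfl|rfl <;> assumption
    · rw [hw10]
      intro hsub
      refine hIA b hb (fun x hx => ?_)
      have h := hsub hx; simp at h
      rcases h with rfl|rfl|rfl|rfl|rfl <;> assumption
    · rw [hw11]
      intro hsub
      refine hIA b hb (fun x hx => ?_)
      have h := hsub hx; simp at h
      rcases h with rfl|rfl|rfl|rfl|rfl <;> assumption
    · rw [hw12]
      intro hsub
      refine hIA b hb (fun x hx => ?_)
      have h := hsub hx; simp at h
      rcases h with rfl|rfl|rfl|rfl|rfl <;> assumption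
    · rw [hw13]
      intro hsub
      refine hIA b hb (fun x hx => ?_)
      have h := hsub hx; simp at h
      rcases h with rfl|rfl|rfl|rfl|rfl <;> assumption
    · -- window 14
      rw [hw14]
      intro hsub
      by_cases hcr4 : r4 ∈ b
      · refine hr4 b hb hcr4 (fun x hx => ?_)
        have h2 := hsub hx
        simp only [List.toFinset_cons, List.toFinset_nil, insert_empty_eq,
        Finset.mem_insert, Finset.mem_singleton] at h2
        simp only [Finset.mem_insert, Finset.mem_singleton]
        rcases h2 with h|h|h|h|h
        exacts [Or.inl h, Or.inr (Or.inl h), Or.inr (Or.inr (Or.inl h)), Or.inr (Or.inr (Or.inr (Or.inl h))), Or.inr (Or.inr (Or.inr (Or.inr (h))))]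
      by_cases hcr3 : r3 ∈ b
      · refine hr3 b hb hcr3 (fun x hx => ?_)
        have h2 := hsub hx
        simp only [List.toFinset_cons, List.toFinset_nil, insert_empty_eq,
        Finset.mem_insert, Finset.mem_singleton] at h2
        simp only [Finset.mem_insert, Finset.mem_singleton]
        rcases h2 with h|h|h|h|h
        exacts [absurd (h ▸ hx) hcr4, Or.inl h, Or.inr (Or.inl h), Or.inr (Or.inr (Or.inl h)), Or.inr (Or.inr (Or.inr (Or.inl h)))]
      by_cases hcr2 : r2 ∈ b
      · refine hr2 b hb hcr2 (fun x hx => ?_)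
        have h2 := hsub hx
        simp only [List.toFinset_cons, List.toFinset_nil, insert_empty_eq,
        Finset.mem_insert, Finset.mem_singleton] at h2
        simp only [Finset.mem_insert, Finset.mem_singleton]
        rcases h2 with h|h|h|h|h
        exacts [absurd (h ▸ hx) hcr4, absurd (h ▸ hx) hcr3, Or.inl h, Or.inr (Or.inl h), Or.inr (Or.inr (Or.inl h))]
      by_cases hcr1 : r1 ∈ b
      · refine hr1 b hb hcr1 (fun x hx => ?_)
        have h2 := hsub hx
        simp only [List.toFinset_cons, List.toFinset_nil, insert_empty_eq,
        Finset.mem_insert, Finset.mem_singleton] at h2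
        simp only [Finset.mem_insert, Finset.mem_singleton]
        rcases h2 with h|h|h|h|h
        exacts [absurd (h ▸ hx) hcr4, absurd (h ▸ hx) hcr3, absurd (h ▸ hx) hcr2, Or.inl h, Or.inr (Or.inl h)]
      refine hIC b hb (fun x hx => ?_)
      have h2 := hsub hx
      simp only [List.toFinset_cons, List.toFinset_nil, insert_empty_eq,
        Finset.mem_insert, Finset.mem_singleton] at h2
      rcases h2 with h|h|h|h|h
      exacts [absurd (h ▸ hx) hcr4, absurd (h ▸ hx) hcr3, absurd (h ▸ hx) hcr2, absurd (h ▸ hx) hcr1, h ▸ hc1C]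
    · -- window 15
      rw [hw15]
      intro hsub
      by_cases hcr3 : r3 ∈ b
      · refine hr3 b hb hcr3 (fun x hx => ?_)
        have h2 := hsub hx
        simp only [List.toFinset_cons, List.toFinset_nil, insert_empty_eq,
        Finset.mem_insert, Finset.mem_singleton] at h2
        simp only [Finset.mem_insert, Finset.mem_singleton]
        rcases h2 with h|h|h|h|h
        exacts [Or.inl h, Or.inr (Or.inl h), Or.inr (Or.inr (Or.inl h)), Or.inr (Or.inr (Or.inr (Or.inl h))), Or.inr (Or.inr (Or.inr (Or.inr (h))))]
      by_cases hcr2 : r2 ∈ b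
      · refine hr2 b hb hcr2 (fun x hx => ?_)
        have h2 := hsub hx
        simp only [List.toFinset_cons, List.toFinset_nil, insert_empty_eq,
        Finset.mem_insert, Finset.mem_singleton] at h2
        simp only [Finset.mem_insert, Finset.mem_singleton]
        rcases h2 with h|h|h|h|h
        exacts [absurd (h ▸ hx) hcr3, Or.inl h, Or.inr (Or.inl h), Or.inr (Or.inr (Or.inl h)), Or.inr (Or.inr (Or.inr (Or.inl h)))]
      by_cases hcr1 : r1 ∈ b
      · refine hr1 b hb hcr1 (fun x hx => ?_)
        have h2 := hsub hx
        simp only [List.toFinset_cons, List.toFinset_nil, insert_empty_eq,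
        Finset.mem_insert, Finset.mem_singleton] at h2
        simp only [Finset.mem_insert, Finset.mem_singleton]
        rcases h2 with h|h|h|h|h
        exacts [absurd (h ▸ hx) hcr3, absurd (h ▸ hx) hcr2, Or.inl h, Or.inr (Or.inl h), Or.inr (Or.inr (Or.inl h))]
      refine hIC b hb (fun x hx => ?_)
      have h2 := hsub hx
      simp only [List.toFinset_cons, List.toFinset_nil, insert_empty_eq,
        Finset.mem_insert, Finset.mem_singleton] at h2
      rcases h2 with h|h|h|h|h
      exacts [absurd (h ▸ hx) hcr3, absurd (h ▸ hx) hcr2, absurd (h ▸ hx) hcr1, h ▸ hc1C, h ▸ hc2C]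
    · -- window 16
      rw [hw16]
      intro hsub
      by_cases hcr2 : r2 ∈ b
      · refine hr2 b hb hcr2 (fun x hx => ?_)
        have h2 := hsub hx
        simp only [List.toFinset_cons, List.toFinset_nil, insert_empty_eq,
        Finset.mem_insert, Finset.mem_singleton] at h2
        simp only [Finset.mem_insert, Finset.mem_singleton]
        rcases h2 with h|h|h|h|h
        exacts [Or.inl h, Or.inr (Or.inl h), Or.inr (Or.inr (Or.inl h)), Or.inr (Or.inr (Or.inr (Or.inl h))), Or.inr (Or.inr (Or.inr (Or.inr (h))))]
      by_cases hcr1 : r1 ∈ b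
      · refine hr1 b hb hcr1 (fun x hx => ?_)
        have h2 := hsub hx
        simp only [List.toFinset_cons, List.toFinset_nil, insert_empty_eq,
        Finset.mem_insert, Finset.mem_singleton] at h2
        simp only [Finset.mem_insert, Finset.mem_singleton]
        rcases h2 with h|h|h|h|h
        exacts [absurd (h ▸ hx) hcr2, Or.inl h, Or.inr (Or.inl h), Or.inr (Or.inr (Or.inl h)), Or.inr (Or.inr (Or.inr (Or.inl h)))]
      refine hIC b hb (fun x hx => ?_)
      have h2 := hsub hx
      simp only [List.toFinset_cons, List.toFinset_nil, insert_empty_eq,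
        Finset.mem_insert, Finset.mem_singleton] at h2
      rcases h2 with h|h|h|h|h
      exacts [absurd (h ▸ hx) hcr2, absurd (h ▸ hx) hcr1, h ▸ hc1C, h ▸ hc2C, h ▸ hc3C]
    · -- window 17
      rw [hw17]
      intro hsub
      by_cases hcr1 : r1 ∈ b
      · refine hr1 b hb hcr1 (fun x hx => ?_)
        have h2 := hsub hx
        simp only [List.toFinset_cons, List.toFinset_nil, insert_empty_eq,
        Finset.mem_insert, Finset.mem_singleton] at h2
        simp only [Finset.mem_insert, Finset.mem_singleton]
        rcases h2 with h|h|h|h|h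
        exacts [Or.inl h, Or.inr (Or.inl h), Or.inr (Or.inr (Or.inl h)), Or.inr (Or.inr (Or.inr (Or.inl h))), Or.inr (Or.inr (Or.inr (Or.inr (h))))]
      refine hIC b hb (fun x hx => ?_)
      have h2 := hsub hx
      simp only [List.toFinset_cons, List.toFinset_nil, insert_empty_eq,
        Finset.mem_insert, Finset.mem_singleton] at h2
      rcases h2 with h|h|h|h|h
      exacts [absurd (h ▸ hx) hcr1, h ▸ hc1C, h ▸ hc2C, h ▸ hc3C, h ▸ hc4C]
    · rw [hw18]
      intro hsub
      refine hIC b hb (fun x hx => ?_)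
      have h := hsub hx; simp at h
      rcases h with rfl|rfl|rfl|rfl|rfl <;> assumption
    · rw [hw19]
      intro hsub
      refine hIC b hb (fun x hx => ?_)
      have h := hsub hx; simp at h
      rcases h with rfl|rfl|rfl|rfl|rfl <;> assumption
    · rw [hw20]
      intro hsub
      refine hIC b hb (fun x hx => ?_)
      have h := hsub hx; simp at h
      rcases h with rfl|rfl|rfl|rfl|rfl <;> assumption
    · rw [hw21]
      intro hsub
      refine hIC b hb (fun x hx => ?_)
      have h := hsub hx; simp at h
      rcases h with rfl|rfl|rfl|rfl <;> assumption
    · rw [hw22]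
      intro hsub
      refine hIC b hb (fun x hx => ?_)
      have h := hsub hx; simp at h
      rcases h with rfl|rfl|rfl <;> assumption
    · rw [hw23]
      intro hsub
      refine hIC b hb (fun x hx => ?_)
      have h := hsub hx; simp at h
      rcases h with rfl|rfl <;> assumption
    · rw [hw24]
      intro hsub
      refine hIC b hb (fun x hx => ?_)
      have h := hsub hx; simp at h
      subst h; assumption
  · have hnil : L.drop i = [] := List.drop_eq_nil_of_le (by rw [hLlen]; omega)
    rw [hnil]
    intro hsub
    simp at hsub
    rw [hsub] at hb3
    simp at hb3
end

section
/- Let S be a Steiner triple system of order 21 with a colouring whose colour classes A, B, C each have cardinality 7. If n denotes the number of blocks with two points in A and one point in B, then: the number of blocks with two points in B and one in C equals n, the number with two points in C and one in A equals n, the number with two points in A and one in C equals 21 − n, the number with two points in B and one in A equals 21 − n, the number with two points in C and one in B equals 21 − n, and the number of blocks with exactly one point in each of A, B and C equals 7. -/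
/-!
Double counting pairs of points. The 21 pairs inside a colour class `X` each lie in a unique
block, which has two points in `X` and its third point in one of the other classes, so the two
counts of blocks of type `XXY` and `XXZ` add up to 21. The 49 pairs between `X` and `Y` are
covered by the blocks of types `XXY` and `YYX` (two pairs each) and by the rainbow blocks (one
pair each). With `XXY = 21 - XXZ`, the three cross equations say that the differences
`AAB - BBC`, `BBC - CCA`, `CCA - AAB` are all equal, hence zero, and then 7 rainbow blocks remain.
-/

open Finset

namespace IsSTS

variable {α : Type*} [DecidableEq α] {points : Finset α} {blocks : Finset (Finset α)}

theorem card_filter_mem_mem (hS : IsSTS points blocks) {x y : α} (hx : x ∈ points)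
    (hy : y ∈ points) (hxy : x ≠ y) : #{b ∈ blocks | x ∈ b ∧ y ∈ b} = 1 := by
  obtain ⟨b, hb, hunique⟩ := hS.2 x hx y hy hxy
  rw [card_eq_one]
  refine ⟨b, eq_singleton_iff_unique_mem.mpr ⟨mem_filter.mpr hb, fun c hc => ?_⟩⟩
  exact hunique c (mem_filter.mp hc)

theorem card_eq_sum_card_filter_mem_mem (hS : IsSTS points blocks) {P : Finset (α × α)}
    (hP : ∀ p ∈ P, p.1 ∈ points ∧ p.2 ∈ points ∧ p.1 ≠ p.2) :
    #P = ∑ b ∈ blocks, #{p ∈ P | p.1 ∈ b ∧ p.2 ∈ b} := by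
  calc #P = ∑ p ∈ P, #{b ∈ blocks | p.1 ∈ b ∧ p.2 ∈ b} := by
        rw [card_eq_sum_ones]
        refine sum_congr rfl fun p hp => ?_
        obtain ⟨h1, h2, hne⟩ := hP p hp
        exact (hS.card_filter_mem_mem h1 h2 hne).symm
    _ = ∑ b ∈ blocks, #{p ∈ P | p.1 ∈ b ∧ p.2 ∈ b} := by
        simp only [card_filter]
        exact sum_comm

theorem card_offDiag_eq_sum (hS : IsSTS points blocks) {X : Finset α} (hX : X ⊆ points) :
    #X.offDiag = ∑ b ∈ blocks, #(b ∩ X).offDiag := by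
  rw [hS.card_eq_sum_card_filter_mem_mem fun p hp => ?_]
  · refine sum_congr rfl fun b _ => congrArg card ?_
    ext p
    simp only [mem_filter, mem_offDiag, mem_inter]
    tauto
  · obtain ⟨h1, h2, hne⟩ := mem_offDiag.mp hp
    exact ⟨hX h1, hX h2, hne⟩

theorem card_product_eq_sum (hS : IsSTS points blocks) {X Y : Finset α} (hX : X ⊆ points)
    (hY : Y ⊆ points) (hXY : Disjoint X Y) :
    #(X ×ˢ Y) = ∑ b ∈ blocks, #((b ∩ X) ×ˢ (b ∩ Y)) := by
  rw [hS.card_eq_sum_card_filter_mem_mem fun p hp => ?_]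
  · refine sum_congr rfl fun b _ => congrArg card ?_
    ext p
    simp only [mem_filter, mem_product, mem_inter]
    tauto
  · obtain ⟨h1, h2⟩ := mem_product.mp hp
    exact ⟨hX h1, hY h2, fun h => disjoint_left.mp hXY h1 (h ▸ h2)⟩

end IsSTS

theorem IsIndep.card_inter_lt {α : Type*} [DecidableEq α] {blocks : Finset (Finset α)}
    {I b : Finset α} (hI : IsIndep blocks I) (hb : b ∈ blocks) : #(b ∩ I) < #b :=
  card_lt_card <| Finset.ssubset_iff_subset_ne.mpr
    ⟨inter_subset_left, fun h => hI b hb (h ▸ inter_subset_right)⟩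

namespace IsColouring3

variable {α : Type*} [DecidableEq α] {points : Finset α} {blocks : Finset (Finset α)}
  {A B C : Finset α}

theorem rotate (h : IsColouring3 points blocks A B C) : IsColouring3 points blocks B C A := by
  obtain ⟨hun, hAB, hAC, hBC, hA, hB, hC⟩ := h
  exact ⟨by rw [← hun, union_comm, union_assoc], hBC, hAB.symm, hAC.symm, hB, hC, hA⟩

theorem swap (h : IsColouring3 points blocks A B C) : IsColouring3 points blocks A C B := by
  obtain ⟨hun, hAB, hAC, hBC, hA, hB, hC⟩ := h
  exact ⟨by rw [← hun, union_right_comm], hAC, hAB, hBC.symm, hA, hC, hB⟩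

theorem subset_left (h : IsColouring3 points blocks A B C) : A ⊆ points :=
  h.1 ▸ subset_union_left.trans subset_union_left

theorem subset_middle (h : IsColouring3 points blocks A B C) : B ⊆ points :=
  h.rotate.subset_left

theorem card_inter_add_card_inter_add_card_inter (h : IsColouring3 points blocks A B C)
    {b : Finset α} (hb : b ⊆ points) : #(b ∩ A) + #(b ∩ B) + #(b ∩ C) = #b := by
  obtain ⟨hun, hAB, hAC, hBC, -⟩ := h
  rw [← card_union_of_disjoint (hAB.mono inter_subset_right inter_subset_right),
    ← card_union_of_disjoint (disjoint_union_left.mpr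
      ⟨hAC.mono inter_subset_right inter_subset_right,
        hBC.mono inter_subset_right inter_subset_right⟩),
    ← inter_union_distrib_left, ← inter_union_distrib_left, hun, inter_eq_left.mpr hb]

theorem card_inter_eq_three_and_card_inter_le_two (hS : IsSTS points blocks)
    (h : IsColouring3 points blocks A B C) {b : Finset α} (hb : b ∈ blocks) :
    #(b ∩ A) + #(b ∩ B) + #(b ∩ C) = 3 ∧ #(b ∩ A) ≤ 2 ∧ #(b ∩ B) ≤ 2 ∧ #(b ∩ C) ≤ 2 := by
  obtain ⟨hbp, hb3⟩ := hS.1 b hb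
  have hsum := h.card_inter_add_card_inter_add_card_inter hbp
  obtain ⟨-, -, -, -, hA, hB, hC⟩ := h
  have := hA.card_inter_lt hb
  have := hB.card_inter_lt hb
  have := hC.card_inter_lt hb
  omega

theorem card_offDiag_eq (hS : IsSTS points blocks) (h : IsColouring3 points blocks A B C) :
    #A.offDiag = 2 * #{b ∈ blocks | #(b ∩ A) = 2 ∧ #(b ∩ B) = 1}
      + 2 * #{b ∈ blocks | #(b ∩ A) = 2 ∧ #(b ∩ C) = 1} := by
  rw [hS.card_offDiag_eq_sum h.subset_left, card_filter, card_filter, mul_sum, mul_sum,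
    ← sum_add_distrib]
  refine sum_congr rfl fun b hb => ?_
  obtain ⟨hsum, hA, hB, hC⟩ := h.card_inter_eq_three_and_card_inter_le_two hS hb
  rw [offDiag_card]
  generalize #(b ∩ A) = x, #(b ∩ B) = y, #(b ∩ C) = z at *
  interval_cases x <;> interval_cases y <;> interval_cases z <;> simp_all

theorem card_product_eq (hS : IsSTS points blocks) (h : IsColouring3 points blocks A B C) :
    #(A ×ˢ B) = 2 * #{b ∈ blocks | #(b ∩ A) = 2 ∧ #(b ∩ B) = 1}
      + 2 * #{b ∈ blocks | #(b ∩ B) = 2 ∧ #(b ∩ A) = 1}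
      + #{b ∈ blocks | #(b ∩ A) = 1 ∧ #(b ∩ B) = 1 ∧ #(b ∩ C) = 1} := by
  rw [hS.card_product_eq_sum h.subset_left h.subset_middle h.2.1, card_filter, card_filter,
    card_filter, mul_sum, mul_sum, ← sum_add_distrib, ← sum_add_distrib]
  refine sum_congr rfl fun b hb => ?_
  obtain ⟨hsum, hA, hB, hC⟩ := h.card_inter_eq_three_and_card_inter_le_two hS hb
  rw [card_product]
  generalize #(b ∩ A) = x, #(b ∩ B) = y, #(b ∩ C) = z at *
  interval_cases x <;> interval_cases y <;> interval_cases z <;> simp_all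

end IsColouring3

theorem stmt13_general {α : Type*} [DecidableEq α] (points : Finset α) (blocks : Finset (Finset α))
    (hS : IsSTS points blocks)
    (A B C : Finset α) (hcol : IsColouring3 points blocks A B C)
    (hA : A.card = 7) (hB : B.card = 7) (hC : C.card = 7)
    (n : ℕ)
    (hn : n = (blocks.filter (fun b => (b ∩ A).card = 2 ∧ (b ∩ B).card = 1)).card) :
    ((blocks.filter (fun b => (b ∩ B).card = 2 ∧ (b ∩ C).card = 1)).card = n) ∧
    ((blocks.filter (fun b => (b ∩ C).card = 2 ∧ (b ∩ A).card = 1)).card = n) ∧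
    (((blocks.filter (fun b => (b ∩ A).card = 2 ∧ (b ∩ C).card = 1)).card : ℤ) = 21 - n) ∧
    (((blocks.filter (fun b => (b ∩ B).card = 2 ∧ (b ∩ A).card = 1)).card : ℤ) = 21 - n) ∧
    (((blocks.filter (fun b => (b ∩ C).card = 2 ∧ (b ∩ B).card = 1)).card : ℤ) = 21 - n) ∧
    ((blocks.filter (fun b =>
        (b ∩ A).card = 1 ∧ (b ∩ B).card = 1 ∧ (b ∩ C).card = 1)).card = 7) := by
  have hAA := hcol.card_offDiag_eq hS
  have hBB := hcol.rotate.card_offDiag_eq hS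
  have hCC := hcol.rotate.rotate.card_offDiag_eq hS
  have hAB := hcol.card_product_eq hS
  have hBC := hcol.rotate.card_product_eq hS
  have hAC := hcol.swap.card_product_eq hS
  have hBCA : #{b ∈ blocks | #(b ∩ B) = 1 ∧ #(b ∩ C) = 1 ∧ #(b ∩ A) = 1}
      = #{b ∈ blocks | #(b ∩ A) = 1 ∧ #(b ∩ B) = 1 ∧ #(b ∩ C) = 1} :=
    congrArg card (filter_congr fun _ _ => by tauto)
  have hACB : #{b ∈ blocks | #(b ∩ A) = 1 ∧ #(b ∩ C) = 1 ∧ #(b ∩ B) = 1}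
      = #{b ∈ blocks | #(b ∩ A) = 1 ∧ #(b ∩ B) = 1 ∧ #(b ∩ C) = 1} :=
    congrArg card (filter_congr fun _ _ => by tauto)
  simp only [offDiag_card, card_product, hA, hB, hC] at hAA hBB hCC hAB hBC hAC
  omega

theorem stmt13 {α : Type*} [DecidableEq α] (points : Finset α) (blocks : Finset (Finset α))
    (hS : IsSTS points blocks) (hv : points.card = 21)
    (A B C : Finset α) (hcol : IsColouring3 points blocks A B C)
    (hA : A.card = 7) (hB : B.card = 7) (hC : C.card = 7)
    (n : ℕ)
    (hn : n = (blocks.filter (fun b => (b ∩ A).card = 2 ∧ (b ∩ B).card = 1)).card) :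
    ((blocks.filter (fun b => (b ∩ B).card = 2 ∧ (b ∩ C).card = 1)).card = n) ∧
    ((blocks.filter (fun b => (b ∩ C).card = 2 ∧ (b ∩ A).card = 1)).card = n) ∧
    (((blocks.filter (fun b => (b ∩ A).card = 2 ∧ (b ∩ C).card = 1)).card : ℤ) = 21 - n) ∧
    (((blocks.filter (fun b => (b ∩ B).card = 2 ∧ (b ∩ A).card = 1)).card : ℤ) = 21 - n) ∧
    (((blocks.filter (fun b => (b ∩ C).card = 2 ∧ (b ∩ B).card = 1)).card : ℤ) = 21 - n) ∧
    ((blocks.filter (fun b =>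
        (b ∩ A).card = 1 ∧ (b ∩ B).card = 1 ∧ (b ∩ C).card = 1)).card = 7) :=
  stmt13_general points blocks hS A B C hcol hA hB hC n hn
end

section
/- Let S be a Steiner triple system of order 21 which admits a colouring with three colour classes each of cardinality 7. Then S admits a 5-good sequencing. -/
namespace STSwork

variable {α : Type*} [DecidableEq α] {points : Finset α} {blocks : Finset (Finset α)}

theorem exists_third (hS : IsSTS points blocks) {x y : α}
    (hx : x ∈ points) (hy : y ∈ points) (hxy : x ≠ y) :
    ∃ z, ({x, y, z} ∈ blocks) ∧ z ≠ x ∧ z ≠ y ∧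
      ∀ b ∈ blocks, x ∈ b → y ∈ b → b = {x, y, z} := by
  obtain ⟨b, ⟨hb, hxb, hyb⟩, huniq⟩ := hS.2 x hx y hy hxy
  have hcard : b.card = 3 := (hS.1 b hb).2
  have hsub : ({x, y} : Finset α) ⊆ b := by
    intro t ht; simp at ht; rcases ht with rfl | rfl <;> assumption
  have hne : (b \ {x, y}).Nonempty := by
    rw [← Finset.card_pos, Finset.card_sdiff_of_subset hsub, hcard]
    have : ({x, y} : Finset α).card ≤ 2 := Finset.card_insert_le _ _ |>.trans (by simp)
    omega
  obtain ⟨z, hz⟩ := hne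
  rw [Finset.mem_sdiff] at hz
  obtain ⟨hzb, hz2⟩ := hz
  simp at hz2
  have hbeq : b = {x, y, z} := by
    have hsub2 : ({x, y, z} : Finset α) ⊆ b := by
      intro t ht; simp at ht; rcases ht with rfl | rfl | rfl <;> assumption
    have hc3 : ({x, y, z} : Finset α).card = 3 :=
      Finset.card_eq_three.mpr ⟨x, y, z, hxy, Ne.symm hz2.1, Ne.symm hz2.2, rfl⟩
    exact (Finset.eq_of_subset_of_card_le hsub2 (by omega)).symm
  refine ⟨z, hbeq ▸ hb, hz2.1, hz2.2, ?_⟩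
  intro b' hb' hxb' hyb'
  rw [← hbeq]
  exact huniq b' ⟨hb', hxb', hyb'⟩

/-- The third point of the block through two distinct points. -/
noncomputable def trd (hS : IsSTS points blocks) (x y : α) : α :=
  if h : x ∈ points ∧ y ∈ points ∧ x ≠ y then
    Classical.choose (exists_third hS h.1 h.2.1 h.2.2)
  else x

theorem trd_spec (hS : IsSTS points blocks) {x y : α}
    (hx : x ∈ points) (hy : y ∈ points) (hxy : x ≠ y) :
    ({x, y, trd hS x y} ∈ blocks) ∧ trd hS x y ≠ x ∧ trd hS x y ≠ y ∧
      ∀ b ∈ blocks, x ∈ b → y ∈ b → b = {x, y, trd hS x y} := by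
  rw [trd, dif_pos (⟨hx, hy, hxy⟩ : x ∈ points ∧ y ∈ points ∧ x ≠ y)]
  exact Classical.choose_spec (exists_third hS hx hy hxy)

theorem trd_block (hS : IsSTS points blocks) {x y : α}
    (hx : x ∈ points) (hy : y ∈ points) (hxy : x ≠ y) :
    ({x, y, trd hS x y} : Finset α) ∈ blocks := (trd_spec hS hx hy hxy).1

theorem trd_ne_left (hS : IsSTS points blocks) {x y : α}
    (hx : x ∈ points) (hy : y ∈ points) (hxy : x ≠ y) :
    trd hS x y ≠ x := (trd_spec hS hx hy hxy).2.1

theorem trd_ne_right (hS : IsSTS points blocks) {x y : α}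
    (hx : x ∈ points) (hy : y ∈ points) (hxy : x ≠ y) :
    trd hS x y ≠ y := (trd_spec hS hx hy hxy).2.2.1

theorem trd_uniq (hS : IsSTS points blocks) {x y : α}
    (hx : x ∈ points) (hy : y ∈ points) (hxy : x ≠ y) :
    ∀ b ∈ blocks, x ∈ b → y ∈ b → b = {x, y, trd hS x y} :=
  (trd_spec hS hx hy hxy).2.2.2

theorem trd_mem (hS : IsSTS points blocks) {x y : α}
    (hx : x ∈ points) (hy : y ∈ points) (hxy : x ≠ y) :
    trd hS x y ∈ points :=
  (hS.1 _ (trd_block hS hx hy hxy)).1 (by simp)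

theorem eq_trd (hS : IsSTS points blocks) {x y z : α} {b : Finset α}
    (hx : x ∈ points) (hy : y ∈ points) (hxy : x ≠ y) (hb : b ∈ blocks)
    (hxb : x ∈ b) (hyb : y ∈ b) (hzb : z ∈ b) (hzx : z ≠ x) (hzy : z ≠ y) :
    z = trd hS x y := by
  have h := trd_uniq hS hx hy hxy b hb hxb hyb
  rw [h] at hzb
  simp at hzb
  rcases hzb with rfl | rfl | h'
  · exact absurd rfl hzx
  · exact absurd rfl hzy
  · exact h'

theorem trd_comm (hS : IsSTS points blocks) {x y : α}
    (hx : x ∈ points) (hy : y ∈ points) (hxy : x ≠ y) :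
    trd hS x y = trd hS y x :=
  eq_trd hS hy hx (Ne.symm hxy) (trd_block hS hx hy hxy)
    (by simp) (by simp) (by simp)
    (trd_ne_right hS hx hy hxy) (trd_ne_left hS hx hy hxy)

/-- A `noblk` fact: no block contains all three of p, q, r. -/
def NoBlk (blocks : Finset (Finset α)) (p q r : α) : Prop :=
  ∀ b ∈ blocks, p ∈ b → q ∈ b → r ∈ b → False

theorem noblk_of_ne_trd (hS : IsSTS points blocks) {p q r : α}
    (hp : p ∈ points) (hq : q ∈ points) (hpq : p ≠ q)
    (hrp : r ≠ p) (hrq : r ≠ q) (hne : r ≠ trd hS p q) :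
    NoBlk blocks p q r := by
  intro b hb hpb hqb hrb
  exact hne (eq_trd hS hp hq hpq hb hpb hqb hrb hrp hrq)

theorem noblk_of_subset (hS : IsSTS points blocks) {S : Finset α}
    (hind : ∀ b ∈ blocks, ¬ b ⊆ S) {p q r : α}
    (hp : p ∈ S) (hq : q ∈ S) (hr : r ∈ S)
    (hpq : p ≠ q) (hpr : p ≠ r) (hqr : q ≠ r) :
    NoBlk blocks p q r := by
  intro b hb hpb hqb hrb
  have hcard : b.card = 3 := (hS.1 b hb).2
  have hsub2 : ({p, q, r} : Finset α) ⊆ b := by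
    intro t ht; simp at ht; rcases ht with rfl | rfl | rfl <;> assumption
  have hc3 : ({p, q, r} : Finset α).card = 3 :=
    Finset.card_eq_three.mpr ⟨p, q, r, hpq, hpr, hqr, rfl⟩
  have hbeq : b = {p, q, r} := (Finset.eq_of_subset_of_card_le hsub2 (by omega)).symm
  apply hind b hb
  rw [hbeq]
  intro t ht; simp at ht; rcases ht with rfl | rfl | rfl <;> assumption

/-- Key window lemma: if every 3 distinct points of V form no block, no block is inside V. -/
theorem not_block_subset (hS : IsSTS points blocks) {V : Finset α}
    (h : ∀ p q r, p ∈ V → q ∈ V → r ∈ V → p ≠ q → p ≠ r → q ≠ r →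
      NoBlk blocks p q r) :
    ∀ b ∈ blocks, ¬ b ⊆ V := by
  intro b hb hsub
  obtain ⟨p, q, r, hpq, hpr, hqr, rfl⟩ := Finset.card_eq_three.mp (hS.1 b hb).2
  exact h p q r (hsub (by simp)) (hsub (by simp)) (hsub (by simp)) hpq hpr hqr
    _ hb (by simp) (by simp) (by simp)

/-- choose an element of X avoiding a small set. -/
theorem exists_avoid {X S : Finset α} (h : S.card < X.card) :
    ∃ x ∈ X, x ∉ S := by
  by_contra hcon
  push_neg at hcon
  exact absurd (Finset.card_le_card hcon) (not_le.mpr h)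

end STSwork

namespace STSwork

variable {α : Type*} [DecidableEq α] {points : Finset α} {blocks : Finset (Finset α)}

theorem NoBlk.rot {p q r : α} (h : NoBlk blocks p q r) : NoBlk blocks r p q :=
  fun b hb h1 h2 h3 => h b hb h2 h3 h1

theorem NoBlk.swap {p q r : α} (h : NoBlk blocks p q r) : NoBlk blocks q p r :=
  fun b hb h1 h2 h3 => h b hb h2 h1 h3

set_option maxHeartbeats 1000000 in
theorem window5 (hS : IsSTS points blocks) {p1 p2 p3 p4 p5 : α}
    (F1 : NoBlk blocks p1 p2 p3) (F2 : NoBlk blocks p1 p2 p4) (F3 : NoBlk blocks p1 p2 p5)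
    (F4 : NoBlk blocks p1 p3 p4) (F5 : NoBlk blocks p1 p3 p5) (F6 : NoBlk blocks p1 p4 p5)
    (F7 : NoBlk blocks p2 p3 p4) (F8 : NoBlk blocks p2 p3 p5) (F9 : NoBlk blocks p2 p4 p5)
    (F10 : NoBlk blocks p3 p4 p5) :
    ∀ b ∈ blocks, ¬ b ⊆ ({p1, p2, p3, p4, p5} : Finset α) := by
  apply not_block_subset hS
  intro p q r hp hq hr hpq hpr hqr b hb h1 h2 h3
  simp only [Finset.mem_insert, Finset.mem_singleton] at hp hq hr
  rcases hp with rfl | rfl | rfl | rfl | rfl <;>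
    rcases hq with rfl | rfl | rfl | rfl | rfl <;>
      rcases hr with rfl | rfl | rfl | rfl | rfl <;>
        first
          | exact hpq rfl
          | exact hpr rfl
          | exact hqr rfl
          | exact F1 b hb ‹_› ‹_› ‹_›
          | exact F2 b hb ‹_› ‹_› ‹_›
          | exact F3 b hb ‹_› ‹_› ‹_›
          | exact F4 b hb ‹_› ‹_› ‹_›
          | exact F5 b hb ‹_› ‹_› ‹_›
          | exact F6 b hb ‹_› ‹_› ‹_›
          | exact F7 b hb ‹_› ‹_› ‹_›
          | exact F8 b hb ‹_› ‹_› ‹_›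
          | exact F9 b hb ‹_› ‹_› ‹_›
          | exact F10 b hb ‹_› ‹_› ‹_›

end STSwork

namespace STSwork

variable {α : Type*} [DecidableEq α] {points : Finset α} {blocks : Finset (Finset α)}

theorem card_le6 (a b c d e f : α) : ({a, b, c, d, e, f} : Finset α).card ≤ 6 := by
  refine le_trans (Finset.card_insert_le _ _) (Nat.succ_le_succ ?_)
  refine le_trans (Finset.card_insert_le _ _) (Nat.succ_le_succ ?_)
  refine le_trans (Finset.card_insert_le _ _) (Nat.succ_le_succ ?_)
  refine le_trans (Finset.card_insert_le _ _) (Nat.succ_le_succ ?_)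
  refine le_trans (Finset.card_insert_le _ _) (Nat.succ_le_succ ?_)
  simp

theorem card_le4 (a b c d : α) : ({a, b, c, d} : Finset α).card ≤ 4 := by
  refine le_trans (Finset.card_insert_le _ _) (Nat.succ_le_succ ?_)
  refine le_trans (Finset.card_insert_le _ _) (Nat.succ_le_succ ?_)
  refine le_trans (Finset.card_insert_le _ _) (Nat.succ_le_succ ?_)
  simp

theorem card_le3 (a b c : α) : ({a, b, c} : Finset α).card ≤ 3 := by
  refine le_trans (Finset.card_insert_le _ _) (Nat.succ_le_succ ?_)
  refine le_trans (Finset.card_insert_le _ _) (Nat.succ_le_succ ?_)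
  simp

set_option maxHeartbeats 3000000 in
theorem side (hS : IsSTS points blocks) {X : Finset α}
    (hXpts : X ⊆ points) (hXcard : X.card = 7)
    (hXind : ∀ b ∈ blocks, ¬ b ⊆ X)
    {m1 m2 m3 m4 : α}
    (hm1 : m1 ∈ points) (hm2 : m2 ∈ points) (hm3 : m3 ∈ points) (hm4 : m4 ∈ points)
    (hm1X : m1 ∉ X) (hm2X : m2 ∉ X) (hm3X : m3 ∉ X) (hm4X : m4 ∉ X)
    (h12 : m1 ≠ m2) (h13 : m1 ≠ m3) (h14 : m1 ≠ m4)
    (h23 : m2 ≠ m3) (h24 : m2 ≠ m4) (h34 : m3 ≠ m4)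
    (hMblk : ∀ b ∈ blocks, ¬ b ⊆ ({m1, m2, m3, m4} : Finset α))
    (hbr : trd hS m1 m2 ∉ X ∨
      ∀ x y, x ∈ X → y ∈ X → x ≠ y →
        trd hS x y ≠ m1 ∧ trd hS x y ≠ m2 ∧ trd hS x y ≠ m3 ∧ trd hS x y ≠ m4) :
    ∃ x4 x5 x6 x7, x4 ∈ X ∧ x5 ∈ X ∧ x6 ∈ X ∧ x7 ∈ X ∧
      x4 ≠ x5 ∧ x4 ≠ x6 ∧ x4 ≠ x7 ∧ x5 ≠ x6 ∧ x5 ≠ x7 ∧ x6 ≠ x7 ∧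
      (∀ b ∈ blocks, ¬ b ⊆ ({x4, x5, x6, x7, m1} : Finset α)) ∧
      (∀ b ∈ blocks, ¬ b ⊆ ({x5, x6, x7, m1, m2} : Finset α)) ∧
      (∀ b ∈ blocks, ¬ b ⊆ ({x6, x7, m1, m2, m3} : Finset α)) ∧
      (∀ b ∈ blocks, ¬ b ⊆ ({x7, m1, m2, m3, m4} : Finset α)) := by
  classical
  -- helper for branch 2
  have key2 : ∀ x x' m, x ∈ X → x' ∈ X → m ∈ points → m ∉ X →
      (∀ u v, u ∈ X → v ∈ X → u ≠ v → trd hS u v ≠ m) → x' ≠ trd hS x m := by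
    intro x x' m hx hx' hm hmX hall heq
    have hxm : x ≠ m := fun h => hmX (h ▸ hx)
    have hxpts := hXpts hx
    have hblk := trd_block hS hxpts hm hxm
    have hx'x : x' ≠ x := by rw [heq]; exact trd_ne_left hS hxpts hm hxm
    have hx'm : x' ≠ m := by rw [heq]; exact trd_ne_right hS hxpts hm hxm
    have hmem : x' ∈ ({x, m, trd hS x m} : Finset α) := by simp [heq]
    have hmeq : m = trd hS x x' :=
      eq_trd hS hxpts (hXpts hx') (Ne.symm hx'x) hblk (by simp) hmem (by simp)
        (Ne.symm hxm) (Ne.symm hx'm)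
    exact hall x x' hx hx' (Ne.symm hx'x) hmeq.symm
  -- step x7
  obtain ⟨x7, hx7X, hx7S⟩ := exists_avoid (X := X)
    (S := {trd hS m1 m2, trd hS m1 m3, trd hS m1 m4, trd hS m2 m3, trd hS m2 m4, trd hS m3 m4})
    (by rw [hXcard]; exact Nat.lt_succ_of_le (card_le6 _ _ _ _ _ _))
  simp only [Finset.mem_insert, Finset.mem_singleton, not_or] at hx7S
  obtain ⟨n12, n13, n14, n23, n24, n34⟩ := hx7S
  have hx7pts := hXpts hx7X
  have hx7m1 : x7 ≠ m1 := fun h => hm1X (h ▸ hx7X)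
  have hx7m2 : x7 ≠ m2 := fun h => hm2X (h ▸ hx7X)
  have hx7m3 : x7 ≠ m3 := fun h => hm3X (h ▸ hx7X)
  -- step x6 : produce uniform pack
  have H6 : ∃ x6, x6 ∈ X ∧ x6 ≠ x7 ∧ x6 ≠ trd hS m1 m2 ∧ x6 ≠ trd hS m1 m3 ∧
      x6 ≠ trd hS m2 m3 ∧ x6 ≠ trd hS x7 m1 ∧ x6 ≠ trd hS x7 m2 ∧ x6 ≠ trd hS x7 m3 := by
    rcases hbr with hbr1 | hbr2
    · obtain ⟨x6, hx6X, hx6S⟩ := exists_avoid (X := X)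
        (S := {x7, trd hS m1 m3, trd hS m2 m3, trd hS x7 m1, trd hS x7 m2, trd hS x7 m3})
        (by rw [hXcard]; exact Nat.lt_succ_of_le (card_le6 _ _ _ _ _ _))
      simp only [Finset.mem_insert, Finset.mem_singleton, not_or] at hx6S
      exact ⟨x6, hx6X, hx6S.1, fun h => hbr1 (h ▸ hx6X), hx6S.2.1, hx6S.2.2.1,
        hx6S.2.2.2.1, hx6S.2.2.2.2.1, hx6S.2.2.2.2.2⟩
    · obtain ⟨x6, hx6X, hx6S⟩ := exists_avoid (X := X)
        (S := {x7, trd hS m1 m2, trd hS m1 m3, trd hS m2 m3})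
        (by rw [hXcard]; exact lt_of_le_of_lt (card_le4 _ _ _ _) (by norm_num))
      simp only [Finset.mem_insert, Finset.mem_singleton, not_or] at hx6S
      refine ⟨x6, hx6X, hx6S.1, hx6S.2.1, hx6S.2.2.1, hx6S.2.2.2, ?_, ?_, ?_⟩
      · exact key2 x7 x6 m1 hx7X hx6X hm1 hm1X (fun u v hu hv huv => (hbr2 u v hu hv huv).1)
      · exact key2 x7 x6 m2 hx7X hx6X hm2 hm2X (fun u v hu hv huv => (hbr2 u v hu hv huv).2.1)
      · exact key2 x7 x6 m3 hx7X hx6X hm3 hm3X (fun u v hu hv huv => (hbr2 u v hu hv huv).2.2.1)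
  obtain ⟨x6, hx6X, hx67, p612, p613, p623, p671, p672, p673⟩ := H6
  have hx6pts := hXpts hx6X
  have hx6m1 : x6 ≠ m1 := fun h => hm1X (h ▸ hx6X)
  have hx6m2 : x6 ≠ m2 := fun h => hm2X (h ▸ hx6X)
  -- step x5
  have H5 : ∃ x5, x5 ∈ X ∧ x5 ≠ x6 ∧ x5 ≠ x7 ∧ x5 ≠ trd hS m1 m2 ∧
      x5 ≠ trd hS x6 m1 ∧ x5 ≠ trd hS x6 m2 ∧ x5 ≠ trd hS x7 m1 ∧ x5 ≠ trd hS x7 m2 := by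
    rcases hbr with hbr1 | hbr2
    · obtain ⟨x5, hx5X, hx5S⟩ := exists_avoid (X := X)
        (S := {x6, x7, trd hS x6 m1, trd hS x6 m2, trd hS x7 m1, trd hS x7 m2})
        (by rw [hXcard]; exact Nat.lt_succ_of_le (card_le6 _ _ _ _ _ _))
      simp only [Finset.mem_insert, Finset.mem_singleton, not_or] at hx5S
      exact ⟨x5, hx5X, hx5S.1, hx5S.2.1, fun h => hbr1 (h ▸ hx5X), hx5S.2.2.1,
        hx5S.2.2.2.1, hx5S.2.2.2.2.1, hx5S.2.2.2.2.2⟩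
    · obtain ⟨x5, hx5X, hx5S⟩ := exists_avoid (X := X)
        (S := {x6, x7, trd hS m1 m2})
        (by rw [hXcard]; exact lt_of_le_of_lt (card_le3 _ _ _) (by norm_num))
      simp only [Finset.mem_insert, Finset.mem_singleton, not_or] at hx5S
      refine ⟨x5, hx5X, hx5S.1, hx5S.2.1, hx5S.2.2, ?_, ?_, ?_, ?_⟩
      · exact key2 x6 x5 m1 hx6X hx5X hm1 hm1X (fun u v hu hv huv => (hbr2 u v hu hv huv).1)
      · exact key2 x6 x5 m2 hx6X hx5X hm2 hm2X (fun u v hu hv huv => (hbr2 u v hu hv huv).2.1)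
      · exact key2 x7 x5 m1 hx7X hx5X hm1 hm1X (fun u v hu hv huv => (hbr2 u v hu hv huv).1)
      · exact key2 x7 x5 m2 hx7X hx5X hm2 hm2X (fun u v hu hv huv => (hbr2 u v hu hv huv).2.1)
  obtain ⟨x5, hx5X, hx56, hx57, p512, p561, p562, p571, p572⟩ := H5
  have hx5pts := hXpts hx5X
  -- step x4
  have H4 : ∃ x4, x4 ∈ X ∧ x4 ≠ x5 ∧ x4 ≠ x6 ∧ x4 ≠ x7 ∧
      x4 ≠ trd hS x5 m1 ∧ x4 ≠ trd hS x6 m1 ∧ x4 ≠ trd hS x7 m1 := by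
    rcases hbr with hbr1 | hbr2
    · obtain ⟨x4, hx4X, hx4S⟩ := exists_avoid (X := X)
        (S := {x5, x6, x7, trd hS x5 m1, trd hS x6 m1, trd hS x7 m1})
        (by rw [hXcard]; exact Nat.lt_succ_of_le (card_le6 _ _ _ _ _ _))
      simp only [Finset.mem_insert, Finset.mem_singleton, not_or] at hx4S
      exact ⟨x4, hx4X, hx4S.1, hx4S.2.1, hx4S.2.2.1, hx4S.2.2.2.1, hx4S.2.2.2.2.1,
        hx4S.2.2.2.2.2⟩
    · obtain ⟨x4, hx4X, hx4S⟩ := exists_avoid (X := X)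
        (S := {x5, x6, x7})
        (by rw [hXcard]; exact lt_of_le_of_lt (card_le3 _ _ _) (by norm_num))
      simp only [Finset.mem_insert, Finset.mem_singleton, not_or] at hx4S
      refine ⟨x4, hx4X, hx4S.1, hx4S.2.1, hx4S.2.2, ?_, ?_, ?_⟩
      · exact key2 x5 x4 m1 hx5X hx4X hm1 hm1X (fun u v hu hv huv => (hbr2 u v hu hv huv).1)
      · exact key2 x6 x4 m1 hx6X hx4X hm1 hm1X (fun u v hu hv huv => (hbr2 u v hu hv huv).1)
      · exact key2 x7 x4 m1 hx7X hx4X hm1 hm1X (fun u v hu hv huv => (hbr2 u v hu hv huv).1)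
  obtain ⟨x4, hx4X, hx45, hx46, hx47, p451, p461, p471⟩ := H4
  have hx4pts := hXpts hx4X
  -- NoBlk facts
  have FA1 : NoBlk blocks x5 m1 x4 := noblk_of_ne_trd hS hx5pts hm1
    (fun h => hm1X (h ▸ hx5X)) hx45 (fun h => hm1X (h ▸ hx4X)) p451
  have FA2 : NoBlk blocks x6 m1 x4 := noblk_of_ne_trd hS hx6pts hm1 hx6m1
    hx46 (fun h => hm1X (h ▸ hx4X)) p461
  have FA3 : NoBlk blocks x7 m1 x4 := noblk_of_ne_trd hS hx7pts hm1 hx7m1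
    hx47 (fun h => hm1X (h ▸ hx4X)) p471
  have FB1 : NoBlk blocks m1 m2 x5 := noblk_of_ne_trd hS hm1 hm2 h12
    (fun h => hm1X (h ▸ hx5X)) (fun h => hm2X (h ▸ hx5X)) p512
  have FB2 : NoBlk blocks x6 m1 x5 := noblk_of_ne_trd hS hx6pts hm1 hx6m1
    hx56 (fun h => hm1X (h ▸ hx5X)) p561
  have FB3 : NoBlk blocks x6 m2 x5 := noblk_of_ne_trd hS hx6pts hm2 hx6m2
    hx56 (fun h => hm2X (h ▸ hx5X)) p562
  have FB4 : NoBlk blocks x7 m1 x5 := noblk_of_ne_trd hS hx7pts hm1 hx7m1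
    hx57 (fun h => hm1X (h ▸ hx5X)) p571
  have FB5 : NoBlk blocks x7 m2 x5 := noblk_of_ne_trd hS hx7pts hm2 hx7m2
    hx57 (fun h => hm2X (h ▸ hx5X)) p572
  have FC1 : NoBlk blocks m1 m2 x6 := noblk_of_ne_trd hS hm1 hm2 h12
    hx6m1 hx6m2 p612
  have FC2 : NoBlk blocks m1 m3 x6 := noblk_of_ne_trd hS hm1 hm3 h13
    hx6m1 (fun h => hm3X (h ▸ hx6X)) p613
  have FC3 : NoBlk blocks m2 m3 x6 := noblk_of_ne_trd hS hm2 hm3 h23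
    hx6m2 (fun h => hm3X (h ▸ hx6X)) p623
  have FC4 : NoBlk blocks x7 m1 x6 := noblk_of_ne_trd hS hx7pts hm1 hx7m1
    hx67 hx6m1 p671
  have FC5 : NoBlk blocks x7 m2 x6 := noblk_of_ne_trd hS hx7pts hm2 hx7m2
    hx67 hx6m2 p672
  have FC6 : NoBlk blocks x7 m3 x6 := noblk_of_ne_trd hS hx7pts hm3 hx7m3
    hx67 (fun h => hm3X (h ▸ hx6X)) p673
  have FD1 : NoBlk blocks m1 m2 x7 := noblk_of_ne_trd hS hm1 hm2 h12 hx7m1 hx7m2 n12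
  have FD2 : NoBlk blocks m1 m3 x7 := noblk_of_ne_trd hS hm1 hm3 h13 hx7m1 hx7m3 n13
  have FD3 : NoBlk blocks m1 m4 x7 := noblk_of_ne_trd hS hm1 hm4 h14 hx7m1
    (fun h => hm4X (h ▸ hx7X)) n14
  have FD4 : NoBlk blocks m2 m3 x7 := noblk_of_ne_trd hS hm2 hm3 h23 hx7m2 hx7m3 n23
  have FD5 : NoBlk blocks m2 m4 x7 := noblk_of_ne_trd hS hm2 hm4 h24 hx7m2
    (fun h => hm4X (h ▸ hx7X)) n24
  have FD6 : NoBlk blocks m3 m4 x7 := noblk_of_ne_trd hS hm3 hm4 h34 hx7m3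
    (fun h => hm4X (h ▸ hx7X)) n34
  have FX1 : NoBlk blocks x4 x5 x6 := noblk_of_subset hS hXind hx4X hx5X hx6X hx45 hx46 hx56
  have FX2 : NoBlk blocks x4 x5 x7 := noblk_of_subset hS hXind hx4X hx5X hx7X hx45 hx47 hx57
  have FX3 : NoBlk blocks x4 x6 x7 := noblk_of_subset hS hXind hx4X hx6X hx7X hx46 hx47 hx67
  have FX4 : NoBlk blocks x5 x6 x7 := noblk_of_subset hS hXind hx5X hx6X hx7X hx56 hx57 hx67
  have FM1 : NoBlk blocks m1 m2 m3 := noblk_of_subset hS hMblk (by simp) (by simp) (by simp)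
    h12 h13 h23
  have FM2 : NoBlk blocks m1 m2 m4 := noblk_of_subset hS hMblk (by simp) (by simp) (by simp)
    h12 h14 h24
  have FM3 : NoBlk blocks m1 m3 m4 := noblk_of_subset hS hMblk (by simp) (by simp) (by simp)
    h13 h14 h34
  have FM4 : NoBlk blocks m2 m3 m4 := noblk_of_subset hS hMblk (by simp) (by simp) (by simp)
    h23 h24 h34
  refine ⟨x4, x5, x6, x7, hx4X, hx5X, hx6X, hx7X, hx45, hx46, hx47, hx56, hx57, hx67,
    ?_, ?_, ?_, ?_⟩
  · exact window5 hS FX1 FX2 FA1.rot FX3 FA2.rot FA3.rot FX4 FB2.rot FB4.rot FC4.rot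
  · exact window5 hS FX4 FB2.rot FB3.rot FB4.rot FB5.rot FB1.rot FC4.rot FC5.rot FC1.rot FD1.rot
  · exact window5 hS FC4.rot FC5.rot FC6.rot FC1.rot FC2.rot FC3.rot FD1.rot FD2.rot FD4.rot FM1
  · exact window5 hS FD1.rot FD2.rot FD3.rot FD4.rot FD5.rot FD6.rot FM1 FM2 FM3 FM4

end STSwork



namespace STSwork

variable {α : Type*} [DecidableEq α] {points : Finset α} {blocks : Finset (Finset α)}

theorem singuni (a : α) (s : Finset α) : ({a} : Finset α) ∪ s = insert a s := by
  ext t; simp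

set_option maxHeartbeats 2000000 in
theorem assemble (hS : IsSTS points blocks) (hv : points.card = 21) {L M R : Finset α}
    (hUnion : L ∪ M ∪ R = points)
    (hLM : Disjoint L M) (hLR : Disjoint L R) (hMR : Disjoint M R)
    (hLind : ∀ b ∈ blocks, ¬ b ⊆ L) (hMind : ∀ b ∈ blocks, ¬ b ⊆ M)
    (hRind : ∀ b ∈ blocks, ¬ b ⊆ R)
    (hLcard : L.card = 7) (hRcard : R.card = 7)
    {m1 m2 m3 m4 m5 m6 m7 : α}
    (hMeq : M = {m1, m2, m3, m4, m5, m6, m7})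
    (h12 : m1 ≠ m2) (h13 : m1 ≠ m3) (h14 : m1 ≠ m4) (h23 : m2 ≠ m3) (h24 : m2 ≠ m4)
    (h34 : m3 ≠ m4) (h45 : m4 ≠ m5) (h46 : m4 ≠ m6) (h47 : m4 ≠ m7) (h56 : m5 ≠ m6)
    (h57 : m5 ≠ m7) (h67 : m6 ≠ m7)
    (HL : trd hS m1 m2 ∉ L ∨ ∀ x y, x ∈ L → y ∈ L → x ≠ y → trd hS x y ∉ M)
    (HR : trd hS m7 m6 ∉ R ∨ ∀ x y, x ∈ R → y ∈ R → x ≠ y → trd hS x y ∉ M) :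
    ∃ q : List α, IsGoodSeq points blocks 5 q := by
  classical
  have hLpts : L ⊆ points := by
    rw [← hUnion]; exact Finset.subset_union_left.trans Finset.subset_union_left
  have hMpts : M ⊆ points := by
    rw [← hUnion]; exact Finset.subset_union_right.trans Finset.subset_union_left
  have hRpts : R ⊆ points := by
    rw [← hUnion]; exact Finset.subset_union_right
  have hm1M : m1 ∈ M := by rw [hMeq]; simp
  have hm2M : m2 ∈ M := by rw [hMeq]; simp
  have hm3M : m3 ∈ M := by rw [hMeq]; simp
  have hm4M : m4 ∈ M := by rw [hMeq]; simp
  have hm5M : m5 ∈ M := by rw [hMeq]; simp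
  have hm6M : m6 ∈ M := by rw [hMeq]; simp
  have hm7M : m7 ∈ M := by rw [hMeq]; simp
  have nL : ∀ {t}, t ∈ M → t ∉ L := fun ht => (Finset.disjoint_right.mp hLM) ht
  have nR : ∀ {t}, t ∈ M → t ∉ R := fun ht => (Finset.disjoint_left.mp hMR) ht
  have hMblk : ∀ b ∈ blocks, ¬ b ⊆ ({m1, m2, m3, m4} : Finset α) := by
    intro b hb hsub
    refine hMind b hb (hsub.trans ?_)
    intro t ht; simp at ht
    rcases ht with rfl | rfl | rfl | rfl <;> assumption
  have hMblk' : ∀ b ∈ blocks, ¬ b ⊆ ({m7, m6, m5, m4} : Finset α) := by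
    intro b hb hsub
    refine hMind b hb (hsub.trans ?_)
    intro t ht; simp at ht
    rcases ht with rfl | rfl | rfl | rfl <;> assumption
  obtain ⟨l4, l5, l6, l7, hl4L, hl5L, hl6L, hl7L, g45, g46, g47, g56, g57, g67,
      W1, W2, W3, W4⟩ :=
    side hS hLpts hLcard hLind (hMpts hm1M) (hMpts hm2M) (hMpts hm3M) (hMpts hm4M)
      (nL hm1M) (nL hm2M) (nL hm3M) (nL hm4M)
      h12 h13 h14 h23 h24 h34 hMblk
      (by
        rcases HL with h | h
        · exact Or.inl h
        · refine Or.inr fun x y hx hy hxy => ?_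
          have hm := h x y hx hy hxy
          exact ⟨fun he => hm (he ▸ hm1M), fun he => hm (he ▸ hm2M),
            fun he => hm (he ▸ hm3M), fun he => hm (he ▸ hm4M)⟩)
  obtain ⟨r4, r3, r2, r1, hr4R, hr3R, hr2R, hr1R, k43, k42, k41, k32, k31, k21,
      Y4, Y3, Y2, Y1⟩ :=
    side hS hRpts hRcard hRind (hMpts hm7M) (hMpts hm6M) (hMpts hm5M) (hMpts hm4M)
      (nR hm7M) (nR hm6M) (nR hm5M) (nR hm4M)
      (Ne.symm h67) (Ne.symm h57) (Ne.symm h47) (Ne.symm h56) (Ne.symm h46)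
      (Ne.symm h45) hMblk'
      (by
        rcases HR with h | h
        · exact Or.inl h
        · refine Or.inr fun x y hx hy hxy => ?_
          have hm := h x y hx hy hxy
          exact ⟨fun he => hm (he ▸ hm7M), fun he => hm (he ▸ hm6M),
            fun he => hm (he ▸ hm5M), fun he => hm (he ▸ hm4M)⟩)
  -- interior points of L
  have hsubL : ({l4, l5, l6, l7} : Finset α) ⊆ L := by
    intro t ht; simp at ht; rcases ht with rfl | rfl | rfl | rfl <;> assumption
  have hcardL4 : ({l4, l5, l6, l7} : Finset α).card = 4 := by
    rw [Finset.card_insert_of_notMem (by simp [g45, g46, g47]),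
      Finset.card_insert_of_notMem (by simp [g56, g57]),
      Finset.card_insert_of_notMem (by simp [g67]), Finset.card_singleton]
  have hLd3 : (L \ {l4, l5, l6, l7}).card = 3 := by
    rw [Finset.card_sdiff_of_subset hsubL, hLcard, hcardL4]
  obtain ⟨e1, e2, e3, he12, he13, he23, hEeq⟩ := Finset.card_eq_three.mp hLd3
  have hLeq : L = {e1, e2, e3, l4, l5, l6, l7} := by
    have h := Finset.sdiff_union_of_subset hsubL
    rw [hEeq] at h
    rw [← h]
    simp only [Finset.insert_union, singuni]
  -- interior points of R
  have hsubR : ({r1, r2, r3, r4} : Finset α) ⊆ R := by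
    intro t ht; simp at ht; rcases ht with rfl | rfl | rfl | rfl <;> assumption
  have hcardR4 : ({r1, r2, r3, r4} : Finset α).card = 4 := by
    rw [Finset.card_insert_of_notMem (by simp [Ne.symm k21, Ne.symm k31, Ne.symm k41]),
      Finset.card_insert_of_notMem (by simp [Ne.symm k32, Ne.symm k42]),
      Finset.card_insert_of_notMem (by simp [Ne.symm k43]), Finset.card_singleton]
  have hRd3 : (R \ {r1, r2, r3, r4}).card = 3 := by
    rw [Finset.card_sdiff_of_subset hsubR, hRcard, hcardR4]
  obtain ⟨f1, f2, f3, hf12, hf13, hf23, hFeq⟩ := Finset.card_eq_three.mp hRd3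
  have hReq : R = {r1, r2, r3, r4, f1, f2, f3} := by
    have h := Finset.sdiff_union_of_subset hsubR
    rw [hFeq] at h
    rw [← h]
    rw [Finset.union_comm]
    simp only [Finset.insert_union, singuni]
  set q : List α := [e1, e2, e3, l4, l5, l6, l7, m1, m2, m3, m4, m5, m6, m7,
    r1, r2, r3, r4, f1, f2, f3] with hq
  have htofin : q.toFinset = points := by
    rw [← hUnion, hLeq, hMeq, hReq, hq]
    simp only [List.toFinset_cons, List.toFinset_nil, insert_empty_eq,
      Finset.union_assoc, Finset.insert_union, singuni]
  refine ⟨q, ?_, htofin, ?_⟩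
  · -- Nodup via card
    have hlen : q.length = 21 := by rw [hq]; rfl
    have hded : q.dedup.length = 21 := by
      rw [← List.card_toFinset, htofin, hv]
    have hdeq : q.dedup = q := q.dedup_sublist.eq_of_length (by rw [hded, hlen])
    exact List.dedup_eq_self.mp hdeq
  · intro i b hb
    by_cases hi : i ≤ 13
    · interval_cases i
      · have e : (q.drop 0).take 5 = [e1, e2, e3, l4, l5] := by rw [hq]; rfl
        rw [e]
        intro hsub
        refine hLind b hb (hsub.trans ?_)
        simp only [List.toFinset_cons, List.toFinset_nil, insert_empty_eq]
        intro t ht; simp at ht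
        rcases ht with rfl | rfl | rfl | rfl | rfl
        · rw [hLeq]; simp
        · rw [hLeq]; simp
        · rw [hLeq]; simp
        · exact hl4L
        · exact hl5L
      · have e : (q.drop 1).take 5 = [e2, e3, l4, l5, l6] := by rw [hq]; rfl
        rw [e]
        intro hsub
        refine hLind b hb (hsub.trans ?_)
        intro t ht; simp at ht
        rcases ht with rfl | rfl | rfl | rfl | rfl
        · rw [hLeq]; simp
        · rw [hLeq]; simp
        · exact hl4L
        · exact hl5L
        · exact hl6L
      · have e : (q.drop 2).take 5 = [e3, l4, l5, l6, l7] := by rw [hq]; rfl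
        rw [e]
        intro hsub
        refine hLind b hb (hsub.trans ?_)
        intro t ht; simp at ht
        rcases ht with rfl | rfl | rfl | rfl | rfl
        · rw [hLeq]; simp
        · exact hl4L
        · exact hl5L
        · exact hl6L
        · exact hl7L
      · have e : (q.drop 3).take 5 = [l4, l5, l6, l7, m1] := by rw [hq]; rfl
        rw [e]
        simp only [List.toFinset_cons, List.toFinset_nil, insert_empty_eq]
        exact W1 b hb
      · have e : (q.drop 4).take 5 = [l5, l6, l7, m1, m2] := by rw [hq]; rfl
        rw [e]
        simp only [List.toFinset_cons, List.toFinset_nil, insert_empty_eq]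
        exact W2 b hb
      · have e : (q.drop 5).take 5 = [l6, l7, m1, m2, m3] := by rw [hq]; rfl
        rw [e]
        simp only [List.toFinset_cons, List.toFinset_nil, insert_empty_eq]
        exact W3 b hb
      · have e : (q.drop 6).take 5 = [l7, m1, m2, m3, m4] := by rw [hq]; rfl
        rw [e]
        simp only [List.toFinset_cons, List.toFinset_nil, insert_empty_eq]
        exact W4 b hb
      · have e : (q.drop 7).take 5 = [m1, m2, m3, m4, m5] := by rw [hq]; rfl
        rw [e]
        intro hsub
        refine hMind b hb (hsub.trans ?_)
        intro t ht; simp at ht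
        rcases ht with rfl | rfl | rfl | rfl | rfl <;> assumption
      · have e : (q.drop 8).take 5 = [m2, m3, m4, m5, m6] := by rw [hq]; rfl
        rw [e]
        intro hsub
        refine hMind b hb (hsub.trans ?_)
        intro t ht; simp at ht
        rcases ht with rfl | rfl | rfl | rfl | rfl <;> assumption
      · have e : (q.drop 9).take 5 = [m3, m4, m5, m6, m7] := by rw [hq]; rfl
        rw [e]
        intro hsub
        refine hMind b hb (hsub.trans ?_)
        intro t ht; simp at ht
        rcases ht with rfl | rfl | rfl | rfl | rfl <;> assumption
      · have e : (q.drop 10).take 5 = [m4, m5, m6, m7, r1] := by rw [hq]; rfl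
        rw [e]
        intro hsub
        refine Y1 b hb (hsub.trans ?_)
        intro t ht; simp at ht ⊢
        rcases ht with rfl | rfl | rfl | rfl | rfl <;> simp
      · have e : (q.drop 11).take 5 = [m5, m6, m7, r1, r2] := by rw [hq]; rfl
        rw [e]
        intro hsub
        refine Y2 b hb (hsub.trans ?_)
        intro t ht; simp at ht ⊢
        rcases ht with rfl | rfl | rfl | rfl | rfl <;> simp
      · have e : (q.drop 12).take 5 = [m6, m7, r1, r2, r3] := by rw [hq]; rfl
        rw [e]
        intro hsub
        refine Y3 b hb (hsub.trans ?_)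
        intro t ht; simp at ht ⊢
        rcases ht with rfl | rfl | rfl | rfl | rfl <;> simp
      · have e : (q.drop 13).take 5 = [m7, r1, r2, r3, r4] := by rw [hq]; rfl
        rw [e]
        intro hsub
        refine Y4 b hb (hsub.trans ?_)
        intro t ht; simp at ht ⊢
        rcases ht with rfl | rfl | rfl | rfl | rfl <;> simp
    · intro hsub
      refine hRind b hb (hsub.trans ?_)
      intro t ht
      rw [List.mem_toFinset] at ht
      have ht2 : t ∈ q.drop i := List.take_subset _ _ ht
      have hdd : q.drop i = ([r1, r2, r3, r4, f1, f2, f3] : List α).drop (i - 14) := by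
        have h14 : q.drop 14 = [r1, r2, r3, r4, f1, f2, f3] := by rw [hq]; rfl
        rw [← h14, List.drop_drop]
        congr 1
        omega
      rw [hdd] at ht2
      have ht3 : t ∈ ([r1, r2, r3, r4, f1, f2, f3] : List α) := List.drop_subset _ _ ht2
      simp at ht3
      rcases ht3 with rfl | rfl | rfl | rfl | rfl | rfl | rfl
      · exact hr1R
      · exact hr2R
      · exact hr3R
      · exact hr4R
      · rw [hReq]; simp
      · rw [hReq]; simp
      · rw [hReq]; simp

end STSwork

namespace STSwork

variable {α : Type*} [DecidableEq α] {points : Finset α} {blocks : Finset (Finset α)}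

theorem trd_notin_indep (hS : IsSTS points blocks) {X : Finset α}
    (hXpts : X ⊆ points) (hXind : ∀ b ∈ blocks, ¬ b ⊆ X)
    {p q : α} (hp : p ∈ X) (hq : q ∈ X) (hpq : p ≠ q) : trd hS p q ∉ X := by
  intro hmem
  refine hXind _ (trd_block hS (hXpts hp) (hXpts hq) hpq) ?_
  intro t ht; simp at ht
  rcases ht with rfl | rfl | rfl <;> assumption

theorem pick2 {M : Finset α} (h : 2 ≤ M.card) :
    ∃ a b, a ∈ M ∧ b ∈ M ∧ a ≠ b := by
  have c0 : (∅ : Finset α).card < M.card := by rw [Finset.card_empty]; omega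
  obtain ⟨a, ha, _⟩ := exists_avoid c0
  have c1 : ({a} : Finset α).card < M.card := by rw [Finset.card_singleton]; omega
  obtain ⟨b, hb, hbS⟩ := exists_avoid c1
  simp at hbS
  exact ⟨a, b, ha, hb, fun he => hbS he.symm⟩

set_option maxHeartbeats 1000000 in
theorem pick4 {M : Finset α} (h : M.card = 7) :
    ∃ a b c d, a ∈ M ∧ b ∈ M ∧ c ∈ M ∧ d ∈ M ∧
      a ≠ b ∧ a ≠ c ∧ a ≠ d ∧ b ≠ c ∧ b ≠ d ∧ c ≠ d := by
  have c0 : (∅ : Finset α).card < M.card := by rw [Finset.card_empty, h]; norm_num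
  obtain ⟨a, ha, _⟩ := exists_avoid c0
  have c1 : ({a} : Finset α).card < M.card := by rw [Finset.card_singleton, h]; norm_num
  obtain ⟨b, hb, hbS⟩ := exists_avoid c1
  have c2 : ({a, b} : Finset α).card < M.card := by
    have := Finset.card_insert_le a ({b} : Finset α)
    rw [Finset.card_singleton] at this
    omega
  obtain ⟨c, hc, hcS⟩ := exists_avoid c2
  have c3 : ({a, b, c} : Finset α).card < M.card := by
    have := card_le3 a b c
    omega
  obtain ⟨d, hd, hdS⟩ := exists_avoid c3
  simp [not_or] at hbS hcS hdS
  exact ⟨a, b, c, d, ha, hb, hc, hd, fun he => hbS he.symm,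
    fun he => hcS.1 he.symm, fun he => hdS.1 he.symm,
    fun he => hcS.2 he.symm, fun he => hdS.2.1 he.symm, fun he => hdS.2.2 he.symm⟩

set_option maxHeartbeats 1000000 in
theorem completeM {M : Finset α} (hM : M.card = 7) {m1 m2 m6 m7 : α}
    (h1 : m1 ∈ M) (h2 : m2 ∈ M) (h6 : m6 ∈ M) (h7 : m7 ∈ M)
    (d12 : m1 ≠ m2) (d16 : m1 ≠ m6) (d17 : m1 ≠ m7)
    (d26 : m2 ≠ m6) (d27 : m2 ≠ m7) (d67 : m6 ≠ m7) :
    ∃ m3 m4 m5, M = {m1, m2, m3, m4, m5, m6, m7} ∧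
      m1 ≠ m3 ∧ m1 ≠ m4 ∧ m2 ≠ m3 ∧ m2 ≠ m4 ∧ m3 ≠ m4 ∧ m4 ≠ m5 ∧
      m4 ≠ m6 ∧ m4 ≠ m7 ∧ m5 ≠ m6 ∧ m5 ≠ m7 := by
  have hsub : ({m1, m2, m6, m7} : Finset α) ⊆ M := by
    intro t ht; simp at ht; rcases ht with rfl | rfl | rfl | rfl <;> assumption
  have hcard4 : ({m1, m2, m6, m7} : Finset α).card = 4 := by
    rw [Finset.card_insert_of_notMem (by simp [d12, d16, d17]),
      Finset.card_insert_of_notMem (by simp [d26, d27]),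
      Finset.card_insert_of_notMem (by simp [d67]), Finset.card_singleton]
  have hd3 : (M \ {m1, m2, m6, m7}).card = 3 := by
    rw [Finset.card_sdiff_of_subset hsub, hM, hcard4]
  obtain ⟨m3, m4, m5, e34, e35, e45, hEeq⟩ := Finset.card_eq_three.mp hd3
  have hm3 : m3 ∈ M \ {m1, m2, m6, m7} := by rw [hEeq]; simp
  have hm4 : m4 ∈ M \ {m1, m2, m6, m7} := by rw [hEeq]; simp
  have hm5 : m5 ∈ M \ {m1, m2, m6, m7} := by rw [hEeq]; simp
  simp [not_or] at hm3 hm4 hm5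
  refine ⟨m3, m4, m5, ?_, Ne.symm hm3.2.1, Ne.symm hm4.2.1, Ne.symm hm3.2.2.1,
    Ne.symm hm4.2.2.1, e34, e45, hm4.2.2.2.1, hm4.2.2.2.2, hm5.2.2.2.1, hm5.2.2.2.2⟩
  have h := Finset.sdiff_union_of_subset hsub
  rw [hEeq] at h
  rw [← h]
  ext t; simp; tauto

set_option maxHeartbeats 1000000 in
theorem handler_nonmono (hS : IsSTS points blocks) (hv : points.card = 21)
    {L M R : Finset α}
    (hUnion : L ∪ M ∪ R = points)
    (hLM : Disjoint L M) (hLR : Disjoint L R) (hMR : Disjoint M R)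
    (hLind : ∀ b ∈ blocks, ¬ b ⊆ L) (hMind : ∀ b ∈ blocks, ¬ b ⊆ M)
    (hRind : ∀ b ∈ blocks, ¬ b ⊆ R)
    (hLcard : L.card = 7) (hMcard : M.card = 7) (hRcard : R.card = 7)
    (hX : ∃ p q, p ∈ M ∧ q ∈ M ∧ p ≠ q ∧ trd hS p q ∈ L)
    (hY : ∃ p q, p ∈ M ∧ q ∈ M ∧ p ≠ q ∧ trd hS p q ∈ R) :
    ∃ q : List α, IsGoodSeq points blocks 5 q := by
  classical
  have hMpts : M ⊆ points := by
    rw [← hUnion]; exact Finset.subset_union_right.trans Finset.subset_union_left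
  have key : ∀ p1 p2 q1 q2, p1 ∈ M → p2 ∈ M → q1 ∈ M → q2 ∈ M →
      p1 ≠ p2 → p1 ≠ q1 → p1 ≠ q2 → p2 ≠ q1 → p2 ≠ q2 → q1 ≠ q2 →
      trd hS p1 p2 ∈ L → trd hS q1 q2 ∈ R →
      ∃ q : List α, IsGoodSeq points blocks 5 q := by
    intro p1 p2 q1 q2 hp1 hp2 hq1 hq2 dpp dp1q1 dp1q2 dp2q1 dp2q2 dqq htL htR
    -- m1 := q1, m2 := q2, m6 := p2, m7 := p1
    obtain ⟨m3, m4, m5, hMeq, h13, h14, h23, h24, h34, h45, h46, h47, h56, h57⟩ :=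
      completeM hMcard hq1 hq2 hp2 hp1 dqq (Ne.symm dp2q1) (Ne.symm dp1q1)
        (Ne.symm dp2q2) (Ne.symm dp1q2) (Ne.symm dpp)
    exact assemble hS hv hUnion hLM hLR hMR hLind hMind hRind hLcard hRcard hMeq
      dqq h13 h14 h23 h24 h34 h45 h46 h47 h56 h57 (Ne.symm dpp)
      (Or.inl (Finset.disjoint_right.mp hLR htR))
      (Or.inl (Finset.disjoint_left.mp hLR htL))
  obtain ⟨a, b, ha, hb, hab, htab⟩ := hX
  obtain ⟨c, d, hc, hd, hcd, htcd⟩ := hY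
  by_cases hdisj : a ≠ c ∧ a ≠ d ∧ b ≠ c ∧ b ≠ d
  · exact key a b c d ha hb hc hd hab hdisj.1 hdisj.2.1 hdisj.2.2.1 hdisj.2.2.2 hcd htab htcd
  · -- overlapping: pick a fresh pair
    have hsub4 : ({a, b, c, d} : Finset α) ⊆ M := by
      intro t ht; simp at ht; rcases ht with rfl | rfl | rfl | rfl <;> assumption
    have hcard4 : ({a, b, c, d} : Finset α).card ≤ 4 := card_le4 _ _ _ _
    have hd2 : 2 ≤ (M \ {a, b, c, d}).card := by
      have := Finset.card_sdiff_of_subset hsub4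
      omega
    obtain ⟨w, z, hw, hz, hwz⟩ := pick2 hd2
    simp [not_or] at hw hz
    obtain ⟨hwM, hwa, hwb, hwc, hwd⟩ := hw
    obtain ⟨hzM, hza, hzb, hzc, hzd⟩ := hz
    have hwzpts : trd hS w z ∈ points := trd_mem hS (hMpts hwM) (hMpts hzM) hwz
    have hnotM : trd hS w z ∉ M := trd_notin_indep hS hMpts hMind hwM hzM hwz
    have hLor : trd hS w z ∈ L ∨ trd hS w z ∈ R := by
      have h2 : trd hS w z ∈ L ∪ M ∪ R := by rw [hUnion]; exact hwzpts
      simp [Finset.mem_union] at h2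
      tauto
    rcases hLor with hL' | hR'
    · exact key w z c d hwM hzM hc hd hwz hwc hwd hzc hzd hcd hL' htcd
    · exact key a b w z ha hb hwM hzM hab (Ne.symm hwa) (Ne.symm hza)
        (Ne.symm hwb) (Ne.symm hzb) hwz htab hR'

set_option maxHeartbeats 1000000 in
theorem handler_mono (hS : IsSTS points blocks) (hv : points.card = 21)
    {L M R : Finset α}
    (hUnion : L ∪ M ∪ R = points)
    (hLM : Disjoint L M) (hLR : Disjoint L R) (hMR : Disjoint M R)
    (hLind : ∀ b ∈ blocks, ¬ b ⊆ L) (hMind : ∀ b ∈ blocks, ¬ b ⊆ M)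
    (hRind : ∀ b ∈ blocks, ¬ b ⊆ R)
    (hLcard : L.card = 7) (hMcard : M.card = 7) (hRcard : R.card = 7)
    (hMtoR : ∀ p q, p ∈ M → q ∈ M → p ≠ q → trd hS p q ∈ R)
    (hRtoL : ∀ p q, p ∈ R → q ∈ R → p ≠ q → trd hS p q ∈ L) :
    ∃ q : List α, IsGoodSeq points blocks 5 q := by
  classical
  obtain ⟨m1, m2, m6, m7, h1, h2, h6, h7, d12, d16, d17, d26, d27, d67⟩ := pick4 hMcard
  obtain ⟨m3, m4, m5, hMeq, h13, h14, h23, h24, h34, h45, h46, h47, h56, h57⟩ :=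
    completeM hMcard h1 h2 h6 h7 d12 d16 d17 d26 d27 d67
  exact assemble hS hv hUnion hLM hLR hMR hLind hMind hRind hLcard hRcard hMeq
    d12 h13 h14 h23 h24 h34 h45 h46 h47 h56 h57 d67
    (Or.inl (Finset.disjoint_right.mp hLR (hMtoR m1 m2 h1 h2 d12)))
    (Or.inr fun x y hx hy hxy => Finset.disjoint_left.mp hLM (hRtoL x y hx hy hxy))

end STSwork

set_option maxHeartbeats 1000000 in
theorem stmt14 {α : Type*} [DecidableEq α] (points : Finset α) (blocks : Finset (Finset α))
    (hS : IsSTS points blocks) (hv : points.card = 21)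
    (A B C : Finset α) (hcol : IsColouring3 points blocks A B C)
    (hA : A.card = 7) (hB : B.card = 7) (hC : C.card = 7) :
    ∃ L : List α, IsGoodSeq points blocks 5 L := by
  classical
  open STSwork in
  obtain ⟨hU, dAB, dAC, dBC, iA, iB, iC⟩ := hcol
  have iA' : ∀ b ∈ blocks, ¬ b ⊆ A := iA
  have iB' : ∀ b ∈ blocks, ¬ b ⊆ B := iB
  have iC' : ∀ b ∈ blocks, ¬ b ⊆ C := iC
  have hApts : A ⊆ points := by
    rw [← hU]; exact Finset.subset_union_left.trans Finset.subset_union_left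
  have hBpts : B ⊆ points := by
    rw [← hU]; exact Finset.subset_union_right.trans Finset.subset_union_left
  have hCpts : C ⊆ points := by
    rw [← hU]; exact Finset.subset_union_right
  -- union permutations
  have u_BAC : B ∪ A ∪ C = points := by rw [← hU]; ext t; simp [Finset.mem_union]; tauto
  have u_ACB : A ∪ C ∪ B = points := by rw [← hU]; ext t; simp [Finset.mem_union]; tauto
  have u_BCA : B ∪ C ∪ A = points := by rw [← hU]; ext t; simp [Finset.mem_union]; tauto
  have u_CAB : C ∪ A ∪ B = points := by rw [← hU]; ext t; simp [Finset.mem_union]; tauto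
  have u_CBA : C ∪ B ∪ A = points := by rw [← hU]; ext t; simp [Finset.mem_union]; tauto
  have dBA := dAB.symm
  have dCA := dAC.symm
  have dCB := dBC.symm
  -- trichotomies
  have hA_or : ∀ p q, p ∈ A → q ∈ A → p ≠ q → trd hS p q ∈ B ∨ trd hS p q ∈ C := by
    intro p q hp hq hpq
    have h1 : trd hS p q ∈ A ∪ B ∪ C := by
      rw [hU]; exact trd_mem hS (hApts hp) (hApts hq) hpq
    have h2 := trd_notin_indep hS hApts iA' hp hq hpq
    simp [Finset.mem_union] at h1; tauto
  have hB_or : ∀ p q, p ∈ B → q ∈ B → p ≠ q → trd hS p q ∈ A ∨ trd hS p q ∈ C := by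
    intro p q hp hq hpq
    have h1 : trd hS p q ∈ A ∪ B ∪ C := by
      rw [hU]; exact trd_mem hS (hBpts hp) (hBpts hq) hpq
    have h2 := trd_notin_indep hS hBpts iB' hp hq hpq
    simp [Finset.mem_union] at h1; tauto
  have hC_or : ∀ p q, p ∈ C → q ∈ C → p ≠ q → trd hS p q ∈ A ∨ trd hS p q ∈ B := by
    intro p q hp hq hpq
    have h1 : trd hS p q ∈ A ∪ B ∪ C := by
      rw [hU]; exact trd_mem hS (hCpts hp) (hCpts hq) hpq
    have h2 := trd_notin_indep hS hCpts iC' hp hq hpq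
    simp [Finset.mem_union] at h1; tauto
  have HA : (∀ p q, p ∈ A → q ∈ A → p ≠ q → trd hS p q ∈ B) ∨
      (∀ p q, p ∈ A → q ∈ A → p ≠ q → trd hS p q ∈ C) ∨
      ((∃ p q, p ∈ A ∧ q ∈ A ∧ p ≠ q ∧ trd hS p q ∈ B) ∧
       (∃ p q, p ∈ A ∧ q ∈ A ∧ p ≠ q ∧ trd hS p q ∈ C)) := by
    by_cases h1 : ∀ p q, p ∈ A → q ∈ A → p ≠ q → trd hS p q ∈ B
    · exact Or.inl h1
    by_cases h2 : ∀ p q, p ∈ A → q ∈ A → p ≠ q → trd hS p q ∈ C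
    · exact Or.inr (Or.inl h2)
    push_neg at h1 h2
    obtain ⟨p1, q1, hp1, hq1, hne1, hn1⟩ := h1
    obtain ⟨p2, q2, hp2, hq2, hne2, hn2⟩ := h2
    refine Or.inr (Or.inr ⟨⟨p2, q2, hp2, hq2, hne2, ?_⟩, ⟨p1, q1, hp1, hq1, hne1, ?_⟩⟩)
    · rcases hA_or p2 q2 hp2 hq2 hne2 with h | h
      · exact h
      · exact absurd h hn2
    · rcases hA_or p1 q1 hp1 hq1 hne1 with h | h
      · exact absurd h hn1
      · exact h
  have HB : (∀ p q, p ∈ B → q ∈ B → p ≠ q → trd hS p q ∈ A) ∨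
      (∀ p q, p ∈ B → q ∈ B → p ≠ q → trd hS p q ∈ C) ∨
      ((∃ p q, p ∈ B ∧ q ∈ B ∧ p ≠ q ∧ trd hS p q ∈ A) ∧
       (∃ p q, p ∈ B ∧ q ∈ B ∧ p ≠ q ∧ trd hS p q ∈ C)) := by
    by_cases h1 : ∀ p q, p ∈ B → q ∈ B → p ≠ q → trd hS p q ∈ A
    · exact Or.inl h1
    by_cases h2 : ∀ p q, p ∈ B → q ∈ B → p ≠ q → trd hS p q ∈ C
    · exact Or.inr (Or.inl h2)
    push_neg at h1 h2
    obtain ⟨p1, q1, hp1, hq1, hne1, hn1⟩ := h1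
    obtain ⟨p2, q2, hp2, hq2, hne2, hn2⟩ := h2
    refine Or.inr (Or.inr ⟨⟨p2, q2, hp2, hq2, hne2, ?_⟩, ⟨p1, q1, hp1, hq1, hne1, ?_⟩⟩)
    · rcases hB_or p2 q2 hp2 hq2 hne2 with h | h
      · exact h
      · exact absurd h hn2
    · rcases hB_or p1 q1 hp1 hq1 hne1 with h | h
      · exact absurd h hn1
      · exact h
  have HC : (∀ p q, p ∈ C → q ∈ C → p ≠ q → trd hS p q ∈ A) ∨
      (∀ p q, p ∈ C → q ∈ C → p ≠ q → trd hS p q ∈ B) ∨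
      ((∃ p q, p ∈ C ∧ q ∈ C ∧ p ≠ q ∧ trd hS p q ∈ A) ∧
       (∃ p q, p ∈ C ∧ q ∈ C ∧ p ≠ q ∧ trd hS p q ∈ B)) := by
    by_cases h1 : ∀ p q, p ∈ C → q ∈ C → p ≠ q → trd hS p q ∈ A
    · exact Or.inl h1
    by_cases h2 : ∀ p q, p ∈ C → q ∈ C → p ≠ q → trd hS p q ∈ B
    · exact Or.inr (Or.inl h2)
    push_neg at h1 h2
    obtain ⟨p1, q1, hp1, hq1, hne1, hn1⟩ := h1
    obtain ⟨p2, q2, hp2, hq2, hne2, hn2⟩ := h2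
    refine Or.inr (Or.inr ⟨⟨p2, q2, hp2, hq2, hne2, ?_⟩, ⟨p1, q1, hp1, hq1, hne1, ?_⟩⟩)
    · rcases hC_or p2 q2 hp2 hq2 hne2 with h | h
      · exact h
      · exact absurd h hn2
    · rcases hC_or p1 q1 hp1 hq1 hne1 with h | h
      · exact absurd h hn1
      · exact h
  rcases HA with tAB | tAC | ⟨eAB, eAC⟩
  · rcases HB with tBA | tBC | ⟨eBA, eBC⟩
    · rcases HC with tCA | tCB | ⟨eCA, eCB⟩
      · -- (B,A,A) : M=C,R=A,L=B
        exact handler_mono hS hv u_BCA dBC dBA dCA iB' iC' iA' hB hC hA tCA tAB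
      · -- (B,A,B) : M=C,R=B,L=A
        exact handler_mono hS hv u_ACB dAC dAB dCB iA' iC' iB' hA hC hB tCB tBA
      · exact handler_nonmono hS hv u_ACB dAC dAB dCB iA' iC' iB' hA hC hB eCA eCB
    · rcases HC with tCA | tCB | ⟨eCA, eCB⟩
      · -- (B,C,A) : M=A,R=B,L=C
        exact handler_mono hS hv u_CAB dCA dCB dAB iC' iA' iB' hC hA hB tAB tBC
      · -- (B,C,B) : M=A,R=B,L=C
        exact handler_mono hS hv u_CAB dCA dCB dAB iC' iA' iB' hC hA hB tAB tBC
      · exact handler_nonmono hS hv u_ACB dAC dAB dCB iA' iC' iB' hA hC hB eCA eCB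
    · -- B nonmono : L=A,M=B,R=C
      exact handler_nonmono hS hv hU dAB dAC dBC iA' iB' iC' hA hB hC eBA eBC
  · rcases HB with tBA | tBC | ⟨eBA, eBC⟩
    · rcases HC with tCA | tCB | ⟨eCA, eCB⟩
      · -- (C,A,A) : M=B,R=A,L=C
        exact handler_mono hS hv u_CBA dCB dCA dBA iC' iB' iA' hC hB hA tBA tAC
      · -- (C,A,B) : M=A,R=C,L=B
        exact handler_mono hS hv u_BAC dBA dBC dAC iB' iA' iC' hB hA hC tAC tCB
      · exact handler_nonmono hS hv u_ACB dAC dAB dCB iA' iC' iB' hA hC hB eCA eCB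
    · rcases HC with tCA | tCB | ⟨eCA, eCB⟩
      · -- (C,C,A) : M=B,R=C,L=A
        exact handler_mono hS hv hU dAB dAC dBC iA' iB' iC' hA hB hC tBC tCA
      · -- (C,C,B) : M=A,R=C,L=B
        exact handler_mono hS hv u_BAC dBA dBC dAC iB' iA' iC' hB hA hC tAC tCB
      · exact handler_nonmono hS hv u_ACB dAC dAB dCB iA' iC' iB' hA hC hB eCA eCB
    · exact handler_nonmono hS hv hU dAB dAC dBC iA' iB' iC' hA hB hC eBA eBC
  · -- A nonmono : L=B,M=A,R=C
    exact handler_nonmono hS hv u_BAC dBA dBC dAC iB' iA' iC' hB hA hC eAB eAC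
end
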